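/- arXiv:2404.06071 — 15 statements merged into one kernel-verified Lean document; each statement's English description precedes it below -/
import Mathlib

section
/- In a bounded distributive lattice A, if a is a join-subfit element (i.e., the principal downset ↓a is join-subfit) and b ≤ a, then b is also a join-subfit element. -/
/-- An element `a` of a lattice with bottom is a *join-subfit element* if the
principal downset `↓a` (a bounded lattice with top `a`) is join-subfit. -/
def IsJoinSubfitElt {A : Type*} [Lattice A] [OrderBot A] (a : A) : Prop :=
  ∀ s t : A, s ≤ a → t ≤ a → ¬ t ≤ s → ∃ y, y ≤ a ∧ t ⊔ y = a ∧ s ⊔ y ≠ a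

theorem jsubfit_down {A : Type*} [DistribLattice A] [BoundedOrder A]
    (a b : A) (ha : IsJoinSubfitElt a) (hba : b ≤ a) : IsJoinSubfitElt b := by
  intro s t hs ht hts
  obtain ⟨y, hy, hty, hsy⟩ := ha s t (hs.trans hba) (ht.trans hba) hts
  refine ⟨y ⊓ b, inf_le_right, ?_, ?_⟩
  · rw [sup_inf_left, hty, inf_eq_right.mpr (sup_le (ht.trans hba) hba), sup_eq_right.mpr ht]
  · intro h
    have hb : b ≤ s ⊔ y := h ▸ sup_le_sup_left inf_le_left s
    exact hsy (le_antisymm (sup_le (hs.trans hba) hy) (hty ▸ sup_le (ht.trans hb) le_sup_right))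
end

section
/- Let A be a bounded distributive lattice with elements a, b such that a ∨ b = 1 and both ↓a and ↓b are join-subfit. Then A is join-subfit. -/
private lemma jsf_aux {A : Type*} [DistribLattice A] [BoundedOrder A]
    (a b s t : A) (hab : a ⊔ b = ⊤) (ha : IsJoinSubfitElt a)
    (h : ¬ t ⊓ a ≤ (s ⊔ b) ⊓ a) :
    ∃ z : A, t ⊔ z = ⊤ ∧ s ⊔ z ≠ ⊤ := by
  obtain ⟨y, hy, hy1, hy2⟩ := ha ((s ⊔ b) ⊓ a) (t ⊓ a) inf_le_right inf_le_right h
  refine ⟨y ⊔ b, ?_, ?_⟩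
  · have h1 : a ≤ t ⊔ y := hy1 ▸ sup_le_sup_right inf_le_left y
    have : (⊤ : A) ≤ t ⊔ (y ⊔ b) := by
      rw [← hab, ← sup_assoc]; exact sup_le_sup_right h1 b
    exact top_le_iff.mp this
  · intro hcon
    apply hy2
    have : ((s ⊔ b) ⊓ a) ⊔ y = (s ⊔ (y ⊔ b)) ⊓ a := by
      rw [inf_sup_right, inf_sup_right, inf_sup_right, inf_eq_left.mpr hy]
      ac_rfl
    rw [this, hcon, top_inf_eq]

theorem jsubfit_of_cover {A : Type*} [DistribLattice A] [BoundedOrder A]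
    (a b : A) (hab : a ⊔ b = ⊤)
    (ha : IsJoinSubfitElt a) (hb : IsJoinSubfitElt b) :
    ∀ s t : A, ¬ t ≤ s → ∃ z : A, t ⊔ z = ⊤ ∧ s ⊔ z ≠ ⊤ := by
  intro s t hts
  by_cases hA : t ⊓ a ≤ (s ⊔ b) ⊓ a
  · by_cases hB : t ⊓ b ≤ (s ⊔ a) ⊓ b
    · -- case C
      set t₀ := t ⊓ (a ⊓ b) with ht₀
      have ht0a : t₀ ≤ a := inf_le_right.trans inf_le_left
      have ht0b : t₀ ≤ b := inf_le_right.trans inf_le_right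
      have ht0s : ¬ t₀ ≤ s := by
        intro hc
        apply hts
        have h1 : t ≤ s ⊔ (a ⊓ b) := by
          calc t = t ⊓ (a ⊔ b) := by rw [hab, inf_top_eq]
            _ = t ⊓ a ⊔ t ⊓ b := inf_sup_left t a b
            _ ≤ ((s ⊔ b) ⊓ a) ⊔ ((s ⊔ a) ⊓ b) := sup_le_sup hA hB
            _ ≤ (s ⊔ b) ⊓ (s ⊔ a) := sup_le
                (le_inf inf_le_left (inf_le_right.trans le_sup_right))
                (le_inf (inf_le_right.trans le_sup_right) inf_le_left)
            _ = s ⊔ (b ⊓ a) := (sup_inf_left s b a).symm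
            _ = s ⊔ (a ⊓ b) := by rw [inf_comm]
        calc t = t ⊓ (s ⊔ (a ⊓ b)) := (inf_eq_left.mpr h1).symm
          _ = t ⊓ s ⊔ t₀ := inf_sup_left t s (a ⊓ b)
          _ ≤ s := sup_le inf_le_right hc
      obtain ⟨y, hy, hy1, hy2⟩ := ha (s ⊓ a) t₀ inf_le_right ht0a
        (fun h => ht0s (h.trans inf_le_left))
      by_cases hC : t₀ ≤ s ⊔ y
      · refine ⟨y ⊔ b, ?_, ?_⟩
        · have h1 : a ≤ t ⊔ y := hy1 ▸ sup_le_sup_right inf_le_left y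
          have : (⊤ : A) ≤ t ⊔ (y ⊔ b) := by
            rw [← hab, ← sup_assoc]; exact sup_le_sup_right h1 b
          exact top_le_iff.mp this
        · intro hcon
          apply hy2
          have hab' : a ⊓ b ≤ (s ⊓ a) ⊔ y := by
            have h1 : a ⊓ b ≤ s ⊔ y := by
              calc a ⊓ b = (t₀ ⊔ y) ⊓ b := by rw [hy1]
                _ = t₀ ⊓ b ⊔ y ⊓ b := inf_sup_right t₀ y b
                _ ≤ (s ⊔ y) ⊔ y := sup_le_sup ((inf_le_left.trans hC))
                    inf_le_left
                _ = s ⊔ y := by rw [sup_assoc, sup_idem]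
            calc a ⊓ b ≤ (s ⊔ y) ⊓ a := le_inf h1 inf_le_left
              _ = s ⊓ a ⊔ y ⊓ a := inf_sup_right s y a
              _ = (s ⊓ a) ⊔ y := by rw [inf_eq_left.mpr hy]
          calc (s ⊓ a) ⊔ y = (s ⊓ a) ⊔ y ⊔ (a ⊓ b) := (sup_eq_left.mpr hab').symm
            _ = (s ⊓ a) ⊔ (y ⊓ a) ⊔ (b ⊓ a) := by
                rw [inf_eq_left.mpr hy, inf_comm b a]
            _ = (s ⊔ (y ⊔ b)) ⊓ a := by
                rw [inf_sup_right, inf_sup_right]; ac_rfl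
            _ = a := by rw [hcon, top_inf_eq]
      · obtain ⟨w, hw, hw1, hw2⟩ := hb ((s ⊔ y) ⊓ b) t₀ inf_le_right ht0b
          (fun h => hC (h.trans inf_le_left))
        refine ⟨y ⊔ w, ?_, ?_⟩
        · have : (⊤ : A) ≤ t ⊔ (y ⊔ w) := by
            calc (⊤ : A) = a ⊔ b := hab.symm
              _ = (t₀ ⊔ y) ⊔ (t₀ ⊔ w) := by rw [hy1, hw1]
              _ = t₀ ⊔ (y ⊔ w) := by ac_rfl
              _ ≤ t ⊔ (y ⊔ w) := sup_le_sup_right inf_le_left _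
          exact top_le_iff.mp this
        · intro hcon
          apply hw2
          calc ((s ⊔ y) ⊓ b) ⊔ w
              = (s ⊓ b) ⊔ (y ⊓ b) ⊔ (w ⊓ b) := by
                rw [inf_sup_right, inf_eq_left.mpr hw]
            _ = (s ⊔ (y ⊔ w)) ⊓ b := by rw [inf_sup_right, inf_sup_right]; ac_rfl
            _ = b := by rw [hcon, top_inf_eq]
    · exact jsf_aux b a s t (by rw [sup_comm]; exact hab) hb hB
  · exact jsf_aux a b s t hab ha hA
end

section
/- The set of join-subfit elements of a frame is an ideal. -/
private lemma jsubfit_key {L : Type*} [Order.Frame L] {a b : L}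
    (ha : IsJoinSubfitElt a) (hb : IsJoinSubfitElt b)
    {s t : L} (hs : s ≤ a ⊔ b) (ht : t ≤ a ⊔ b) (hta : ¬ t ⊓ a ≤ s) :
    ∃ y, y ≤ a ⊔ b ∧ t ⊔ y = a ⊔ b ∧ s ⊔ y ≠ a ⊔ b := by
  by_cases hcase : t ⊓ a ≤ s ⊔ b
  · -- sequential case: u = t ⊓ a ⊓ b is not below s
    set u := t ⊓ a ⊓ b with hu
    have hus : ¬ u ≤ s := by
      intro h
      apply hta
      calc t ⊓ a = (t ⊓ a) ⊓ (s ⊔ b) := (inf_eq_left.mpr hcase).symm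
        _ = (t ⊓ a) ⊓ s ⊔ u := inf_sup_left (t ⊓ a) s b
        _ ≤ s ⊔ s := sup_le_sup inf_le_right h
        _ = s := sup_idem s
    have hua : u ≤ a := le_trans inf_le_left inf_le_right
    have hub : u ≤ b := inf_le_right
    have hut : u ≤ t := le_trans inf_le_left inf_le_left
    -- step 1: subfitness of a
    obtain ⟨y₁, hy₁a, h1, h2⟩ := ha (s ⊓ a) u inf_le_right hua
      (fun h => hus (le_trans h inf_le_left))
    have husy : ¬ u ≤ s ⊔ y₁ := by
      intro h
      apply h2
      have : a ≤ s ⊔ y₁ := by rw [← h1]; exact sup_le h le_sup_right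
      have := inf_eq_left.mpr this  -- a ⊓ (s ⊔ y₁) = a
      calc s ⊓ a ⊔ y₁ = a ⊓ s ⊔ a ⊓ y₁ := by
            rw [inf_comm s a, inf_eq_right.mpr hy₁a]
        _ = a ⊓ (s ⊔ y₁) := (inf_sup_left a s y₁).symm
        _ = a := this
    -- step 2: subfitness of b
    obtain ⟨y₂, hy₂b, h3, h4⟩ := hb ((s ⊔ y₁) ⊓ b) u inf_le_right hub
      (fun h => husy (le_trans h inf_le_left))
    refine ⟨y₁ ⊔ y₂, sup_le (le_trans hy₁a le_sup_left) (le_trans hy₂b le_sup_right), ?_, ?_⟩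
    · apply le_antisymm (sup_le ht (sup_le (le_trans hy₁a le_sup_left)
        (le_trans hy₂b le_sup_right)))
      apply sup_le
      · calc a = u ⊔ y₁ := h1.symm
          _ ≤ t ⊔ (y₁ ⊔ y₂) := sup_le (le_trans hut le_sup_left)
              (le_trans le_sup_left le_sup_right)
      · calc b = u ⊔ y₂ := h3.symm
          _ ≤ t ⊔ (y₁ ⊔ y₂) := sup_le (le_trans hut le_sup_left)
              (le_trans le_sup_right le_sup_right)
    · intro h
      apply h4
      have hble : b ≤ s ⊔ y₁ ⊔ y₂ := by
        rw [sup_assoc, h]; exact le_sup_right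
      have := inf_eq_left.mpr hble  -- b ⊓ (s ⊔ y₁ ⊔ y₂) = b
      calc (s ⊔ y₁) ⊓ b ⊔ y₂ = b ⊓ (s ⊔ y₁) ⊔ b ⊓ y₂ := by
            rw [inf_comm (s ⊔ y₁) b, inf_eq_right.mpr hy₂b]
        _ = b ⊓ (s ⊔ y₁ ⊔ y₂) := (inf_sup_left b (s ⊔ y₁) y₂).symm
        _ = b := this
  · -- one-shot case: t ⊓ a is not below s ⊔ b
    obtain ⟨y₁, hy₁a, h1, h2⟩ := ha ((s ⊔ b) ⊓ a) (t ⊓ a) inf_le_right inf_le_right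
      (fun h => hcase (le_trans h inf_le_left))
    refine ⟨y₁ ⊔ b, sup_le (le_trans hy₁a le_sup_left) le_sup_right, ?_, ?_⟩
    · apply le_antisymm (sup_le ht (sup_le (le_trans hy₁a le_sup_left) le_sup_right))
      apply sup_le
      · calc a = t ⊓ a ⊔ y₁ := h1.symm
          _ ≤ t ⊔ (y₁ ⊔ b) := sup_le (le_trans inf_le_left le_sup_left)
              (le_trans le_sup_left le_sup_right)
      · exact le_trans le_sup_right le_sup_right
    · intro h
      apply h2
      have hale : a ≤ s ⊔ b ⊔ y₁ := by
        have : a ≤ s ⊔ (y₁ ⊔ b) := by rw [h]; exact le_sup_left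
        calc a ≤ s ⊔ (y₁ ⊔ b) := this
          _ = s ⊔ b ⊔ y₁ := by rw [sup_comm y₁ b, ← sup_assoc]
      have := inf_eq_left.mpr hale  -- a ⊓ (s ⊔ b ⊔ y₁) = a
      calc (s ⊔ b) ⊓ a ⊔ y₁ = a ⊓ (s ⊔ b) ⊔ a ⊓ y₁ := by
            rw [inf_comm (s ⊔ b) a, inf_eq_right.mpr hy₁a]
        _ = a ⊓ (s ⊔ b ⊔ y₁) := (inf_sup_left a (s ⊔ b) y₁).symm
        _ = a := this

/-- The set of join-subfit elements of a frame is an ideal: it contains `⊥`,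
is downward closed, and is closed under binary joins. -/
theorem jsubfit_elts_ideal_frame {L : Type*} [Order.Frame L] :
    IsJoinSubfitElt (⊥ : L) ∧
    (∀ a b : L, IsJoinSubfitElt a → b ≤ a → IsJoinSubfitElt b) ∧
    (∀ a b : L, IsJoinSubfitElt a → IsJoinSubfitElt b → IsJoinSubfitElt (a ⊔ b)) := by
  refine ⟨?_, ?_, ?_⟩
  · intro s t hs ht hts
    exact absurd (le_trans ht bot_le) hts
  · intro a b ha hba s t hs ht hts
    obtain ⟨y, hya, h1, h2⟩ := ha s t (le_trans hs hba) (le_trans ht hba) hts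
    refine ⟨y ⊓ b, inf_le_right, ?_, ?_⟩
    · calc t ⊔ y ⊓ b = (t ⊔ y) ⊓ (t ⊔ b) := sup_inf_left t y b
        _ = a ⊓ b := by rw [h1, sup_eq_right.mpr ht]
        _ = b := inf_eq_right.mpr hba
    · intro h
      apply h2
      apply le_antisymm (sup_le (le_trans hs hba) hya)
      calc a = t ⊔ y := h1.symm
        _ ≤ (s ⊔ y ⊓ b) ⊔ y := sup_le (by rw [h]; exact le_trans ht le_sup_left) le_sup_right
        _ ≤ s ⊔ y := sup_le (sup_le le_sup_left (le_trans inf_le_left le_sup_right))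
            le_sup_right
  · intro a b ha hb s t hs ht hts
    have : ¬ t ⊓ a ≤ s ∨ ¬ t ⊓ b ≤ s := by
      by_contra h
      push_neg at h
      apply hts
      calc t = t ⊓ (a ⊔ b) := (inf_eq_left.mpr ht).symm
        _ = t ⊓ a ⊔ t ⊓ b := inf_sup_left t a b
        _ ≤ s := sup_le h.1 h.2
    rcases this with h | h
    · exact jsubfit_key ha hb hs ht h
    · rw [sup_comm a b] at hs ht ⊢
      exact jsubfit_key hb ha hs ht h
end

section
/- With A as defined (A = ℱ ∪ ℱ₀ ∪ ℱ₁ ∪ ℱ₀₁ ∪ ℱ₁₂ ∪ 𝒞₀₁₂ ⊆ 𝒫(ℕ)) and a = {0}, the upset ↑a = {x ∈ A : a ⊆ x} is meet-subfit: for all x, y ∈ ↑a with y ⊄ x there exists z ∈ ↑a with x ∩ z = a and y ∩ z ≠ a. -/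
/-- Finite subsets of `{n : ℕ | 3 ≤ n}`. -/
def Fam : Set (Set ℕ) := {s | s.Finite ∧ ∀ n ∈ s, 3 ≤ n}

def Fam0 : Set (Set ℕ) := {s | ∃ F ∈ Fam, s = F ∪ {0}}
def Fam1 : Set (Set ℕ) := {s | ∃ F ∈ Fam, s = F ∪ {1}}
def Fam01 : Set (Set ℕ) := {s | ∃ F ∈ Fam, s = F ∪ {0, 1}}
def Fam12 : Set (Set ℕ) := {s | ∃ F ∈ Fam, s = F ∪ {1, 2}}

/-- Cofinite subsets of `ℕ` containing `{0,1,2}`. -/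
def Cof012 : Set (Set ℕ) := {s | sᶜ.Finite ∧ {0, 1, 2} ⊆ s}

/-- The meet-semilattice `A`. -/
def SemiA : Set (Set ℕ) := Fam ∪ Fam0 ∪ Fam1 ∪ Fam01 ∪ Fam12 ∪ Cof012

lemma zmem (n : ℕ) (hn : 3 ≤ n ∨ n = 1) : ({n, 0} : Set ℕ) ∈ SemiA := by
  rcases hn with hn | rfl
  · have : ({n, 0} : Set ℕ) ∈ Fam0 := by
      refine ⟨{n}, ⟨Set.finite_singleton n, ?_⟩, ?_⟩
      · intro m hm; simp at hm; omega
      · ext m; simp [or_comm]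
    simp [SemiA]; tauto
  · have : ({1, 0} : Set ℕ) ∈ Fam01 := by
      refine ⟨∅, ⟨Set.finite_empty, by simp⟩, ?_⟩
      ext m; simp [or_comm]
    simp [SemiA]; tauto

lemma step (x y : Set ℕ) (n : ℕ) (hn : 3 ≤ n ∨ n = 1) (h0x : 0 ∈ x)
    (hny : n ∈ y) (hnx : n ∉ x) :
    ∃ z ∈ SemiA, ({0} : Set ℕ) ⊆ z ∧ x ∩ z = {0} ∧ y ∩ z ≠ {0} := by
  have hn0 : n ≠ 0 := by omega
  refine ⟨{n, 0}, zmem n hn, by simp, ?_, ?_⟩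
  · ext m
    simp only [Set.mem_inter_iff, Set.mem_insert_iff, Set.mem_singleton_iff]
    constructor
    · rintro ⟨hmx, rfl | rfl⟩
      · exact absurd hmx hnx
      · rfl
    · rintro rfl; exact ⟨h0x, Or.inr rfl⟩
  · intro h
    have : n ∈ y ∩ ({n, 0} : Set ℕ) := ⟨hny, Or.inl rfl⟩
    rw [h] at this
    exact hn0 this

lemma cof_of (y : Set ℕ) (hy : y ∈ SemiA) (h0 : 0 ∈ y) (h2 : 2 ∈ y) : y ∈ Cof012 := by
  rcases hy with (((((h | h) | h) | h) | h) | h)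
  · exact absurd (h.2 0 h0) (by omega)
  · obtain ⟨F, hF, rfl⟩ := h
    rcases h2 with h2 | h2
    · exact absurd (hF.2 2 h2) (by omega)
    · simp at h2
  · obtain ⟨F, hF, rfl⟩ := h
    rcases h0 with h0 | h0
    · exact absurd (hF.2 0 h0) (by omega)
    · simp at h0
  · obtain ⟨F, hF, rfl⟩ := h
    rcases h2 with h2 | h2
    · exact absurd (hF.2 2 h2) (by omega)
    · simp at h2
  · obtain ⟨F, hF, rfl⟩ := h
    rcases h0 with h0 | h0
    · exact absurd (hF.2 0 h0) (by omega)
    · simp at h0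
  · exact h

lemma fin_of (x : Set ℕ) (hx : x ∈ SemiA) (h2 : 2 ∉ x) : x.Finite := by
  rcases hx with (((((h | h) | h) | h) | h) | h)
  · exact h.1
  · obtain ⟨F, hF, rfl⟩ := h; exact hF.1.union (Set.finite_singleton 0)
  · obtain ⟨F, hF, rfl⟩ := h; exact hF.1.union (Set.finite_singleton 1)
  · obtain ⟨F, hF, rfl⟩ := h; exact hF.1.union (Set.toFinite _)
  · obtain ⟨F, hF, rfl⟩ := h; exact hF.1.union (Set.toFinite _)
  · exact absurd (h.2 (by simp)) h2


/-- The upset `↑{0}` in `A` is meet-subfit. -/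
theorem upset_a_meet_subfit :
    ∀ x ∈ SemiA, ∀ y ∈ SemiA, ({0} : Set ℕ) ⊆ x → ({0} : Set ℕ) ⊆ y → ¬ y ⊆ x →
      ∃ z ∈ SemiA, ({0} : Set ℕ) ⊆ z ∧ x ∩ z = {0} ∧ y ∩ z ≠ {0} := by
  intro x hx y hy hax hay hyx
  have h0x : 0 ∈ x := hax rfl
  have h0y : 0 ∈ y := hay rfl
  obtain ⟨n, hny, hnx⟩ := Set.not_subset.mp hyx
  rcases Nat.lt_or_ge n 3 with hn3 | hn3
  · interval_cases n
    · exact absurd h0x hnx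
    · exact step x y 1 (Or.inr rfl) h0x hny hnx
    · -- n = 2
      have hycof := cof_of y hy h0y hny
      have h1y : 1 ∈ y := hycof.2 (by simp)
      by_cases h1x : 1 ∈ x
      · have hxfin := fin_of x hx hnx
        have hfin : (x ∪ yᶜ ∪ {0, 1, 2} : Set ℕ).Finite :=
          (hxfin.union hycof.1).union (Set.toFinite _)
        obtain ⟨m, hm⟩ := hfin.infinite_compl.nonempty
        simp only [Set.mem_compl_iff, Set.mem_union, Set.mem_insert_iff,
          Set.mem_singleton_iff, not_or, not_not] at hm
        obtain ⟨⟨hmx, hmy⟩, hm0, hm1, hm2⟩ := hm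
        exact step x y m (Or.inl (by omega)) h0x hmy hmx
      · exact step x y 1 (Or.inr rfl) h0x h1y h1x
  · exact step x y n (Or.inl hn3) h0x hny hnx
end

section
/- With A as defined and b = {1}, the upset ↑b = {x ∈ A : b ⊆ x} is meet-subfit: for all x, y ∈ ↑b with y ⊄ x there exists z ∈ ↑b with x ∩ z = b and y ∩ z ≠ b. -/
/-- The upset `↑{1}` in `A` is meet-subfit. -/
theorem upset_b_meet_subfit :
    ∀ x ∈ SemiA, ∀ y ∈ SemiA, ({1} : Set ℕ) ⊆ x → ({1} : Set ℕ) ⊆ y → ¬ y ⊆ x →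
      ∃ z ∈ SemiA, ({1} : Set ℕ) ⊆ z ∧ x ∩ z = {1} ∧ y ∩ z ≠ {1} := by
  intro x _ y _ hx hy hyx
  obtain ⟨n, hny, hnx⟩ := Set.not_subset.mp hyx
  have h1x : (1 : ℕ) ∈ x := hx rfl
  have hn1 : n ≠ 1 := fun h => hnx (h ▸ h1x)
  refine ⟨insert n {1}, ?_, ?_, ?_, ?_⟩
  · -- membership in SemiA
    match n, hn1 with
    | 0, _ =>
      -- z = {0,1} ∈ Fam01
      exact Or.inl (Or.inl (Or.inr ⟨∅, ⟨Set.finite_empty, by simp⟩, by simp⟩))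
    | 1, h => exact absurd rfl h
    | 2, _ =>
      -- z = {2,1} ∈ Fam12
      exact Or.inl (Or.inr ⟨∅, ⟨Set.finite_empty, by simp⟩, by ext m; simp [or_comm]⟩)
    | (m+3), _ =>
      -- z = {m+3,1} ∈ Fam1
      exact Or.inl (Or.inl (Or.inl (Or.inr ⟨{m+3}, ⟨Set.finite_singleton _, by simp⟩,
        by rw [Set.union_singleton, Set.pair_comm]⟩)))
  · intro m hm; simp at hm; subst hm; simp
  · ext m
    simp only [Set.mem_inter_iff, Set.mem_insert_iff, Set.mem_singleton_iff]
    constructor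
    · rintro ⟨hmx, rfl | rfl⟩
      · exact absurd hmx hnx
      · rfl
    · rintro rfl; exact ⟨h1x, Or.inr rfl⟩
  · intro h
    have : n ∈ ({1} : Set ℕ) := h ▸ ⟨hny, Or.inl rfl⟩
    exact hn1 this
end

section
/- With A as defined, the meet-semilattice A (with least element ∅) is NOT meet-subfit: taking y = {1,2} and x = {1}, we have y ⊄ x, but there is no z ∈ A with x ∩ z = ∅ and y ∩ z ≠ ∅. -/
/-- `A` itself is not meet-subfit: witnessed by `y = {1,2}` and `x = {1}`. -/
theorem semiA_not_meet_subfit :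
    ({1, 2} : Set ℕ) ∈ SemiA ∧ ({1} : Set ℕ) ∈ SemiA ∧
    ¬ ({1, 2} : Set ℕ) ⊆ ({1} : Set ℕ) ∧
    ∀ z ∈ SemiA, ({1} : Set ℕ) ∩ z = ∅ → ({1, 2} : Set ℕ) ∩ z = ∅ := by
  refine ⟨?_, ?_, ?_, ?_⟩
  · -- {1,2} ∈ Fam12 with F = ∅
    left; right
    exact ⟨∅, ⟨Set.finite_empty, by simp⟩, by simp⟩
  · -- {1} ∈ Fam1
    left; left; left; right
    exact ⟨∅, ⟨Set.finite_empty, by simp⟩, by simp⟩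
  · intro h
    have := h (by simp : (2:ℕ) ∈ ({1,2} : Set ℕ))
    simp at this
  · intro z hz h1
    have h1' : (1:ℕ) ∉ z := by
      intro h
      have : (1:ℕ) ∈ ({1} : Set ℕ) ∩ z := ⟨rfl, h⟩
      rw [h1] at this; exact this
    have h2' : (2:ℕ) ∉ z := by
      rcases hz with ((((hf | h0) | hA) | hB) | hC) | hD
      · intro h2; have := hf.2 2 h2; omega
      · rcases h0 with ⟨F, hF, rfl⟩
        intro h2
        rcases h2 with h2 | h2
        · have := hF.2 2 h2; omega
        · simp at h2
      · rcases hA with ⟨F, hF, rfl⟩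
        exact absurd (Or.inr rfl) h1'
      · rcases hB with ⟨F, hF, rfl⟩
        exact absurd (Or.inr (Or.inr rfl)) h1'
      · rcases hC with ⟨F, hF, rfl⟩
        exact absurd (Or.inr (Or.inl rfl)) h1'
      · exact absurd (hD.2 (by simp)) h1'
    ext n
    simp only [Set.mem_inter_iff, Set.mem_insert_iff, Set.mem_singleton_iff,
      Set.mem_empty_iff_false, iff_false, not_and]
    rintro (rfl | rfl) <;> assumption
end

section
/- With A as defined and b = {1}, the upset ↑b is a distributive meet-semilattice: for all x, y, z ∈ ↑b with x ∩ y ⊆ z there exist x', y' ∈ ↑b with x ⊆ x', y ⊆ y', and x' ∩ y' = z. -/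
lemma fam_union {F G : Set ℕ} (hF : F ∈ Fam) (hG : G ∈ Fam) : F ∪ G ∈ Fam :=
  ⟨hF.1.union hG.1, by rintro n (h | h); exacts [hF.2 n h, hG.2 n h]⟩

lemma fam_notmem {F : Set ℕ} (hF : F ∈ Fam) {n : ℕ} (hn : n < 3) : n ∉ F :=
  fun h => by have := hF.2 n h; omega

lemma fam1_semiA : Fam1 ⊆ SemiA := fun _ h => Or.inl (Or.inl (Or.inl (Or.inr h)))
lemma fam01_semiA : Fam01 ⊆ SemiA := fun _ h => Or.inl (Or.inl (Or.inr h))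
lemma fam12_semiA : Fam12 ⊆ SemiA := fun _ h => Or.inl (Or.inr h)
lemma cof_semiA : Cof012 ⊆ SemiA := fun _ h => Or.inr h

lemma mem_char {s : Set ℕ} (hs : s ∈ SemiA) (h1 : (1:ℕ) ∈ s) :
    s ∈ Fam1 ∨ s ∈ Fam01 ∨ s ∈ Fam12 ∨ s ∈ Cof012 := by
  rcases hs with ((((h | h) | h) | h) | h) | h
  · exact absurd (h.2 1 h1) (by omega)
  · obtain ⟨F, hF, rfl⟩ := h
    rcases h1 with h | h
    · exact absurd (hF.2 1 h) (by omega)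
    · simp at h
  · exact Or.inl h
  · exact Or.inr (Or.inl h)
  · exact Or.inr (Or.inr (Or.inl h))
  · exact Or.inr (Or.inr (Or.inr h))

lemma fam1_spec {s : Set ℕ} (h : s ∈ Fam1) :
    s.Finite ∧ (1:ℕ) ∈ s ∧ (0:ℕ) ∉ s ∧ (2:ℕ) ∉ s := by
  obtain ⟨F, hF, rfl⟩ := h
  refine ⟨hF.1.union (Set.finite_singleton 1), Or.inr rfl, ?_, ?_⟩ <;>
    · rintro (h | h)
      · exact fam_notmem hF (by omega) h
      · simp at h

lemma fam01_spec {s : Set ℕ} (h : s ∈ Fam01) :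
    s.Finite ∧ (0:ℕ) ∈ s ∧ (1:ℕ) ∈ s ∧ (2:ℕ) ∉ s := by
  obtain ⟨F, hF, rfl⟩ := h
  refine ⟨hF.1.union ((Set.finite_singleton 1).insert 0),
    Or.inr (Or.inl rfl), Or.inr (Or.inr rfl), ?_⟩
  rintro (h | h)
  · exact fam_notmem hF (by omega) h
  · simp at h

lemma fam12_spec {s : Set ℕ} (h : s ∈ Fam12) :
    s.Finite ∧ (1:ℕ) ∈ s ∧ (2:ℕ) ∈ s ∧ (0:ℕ) ∉ s := by
  obtain ⟨F, hF, rfl⟩ := h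
  refine ⟨hF.1.union ((Set.finite_singleton 2).insert 1),
    Or.inr (Or.inl rfl), Or.inr (Or.inr rfl), ?_⟩
  rintro (h | h)
  · exact fam_notmem hF (by omega) h
  · simp at h

lemma u_gen {s t C D : Set ℕ} (hs : ∃ F ∈ Fam, s = F ∪ C) (ht : ∃ G ∈ Fam, t = G ∪ D) :
    ∃ H ∈ Fam, s ∪ t = H ∪ (C ∪ D) := by
  obtain ⟨F, hF, rfl⟩ := hs
  obtain ⟨G, hG, rfl⟩ := ht
  exact ⟨F ∪ G, fam_union hF hG, Set.union_union_union_comm F C G D⟩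

lemma union_cof_left {s t : Set ℕ} (hs : s ∈ Cof012) : s ∪ t ∈ Cof012 :=
  ⟨hs.1.subset (Set.compl_subset_compl.mpr Set.subset_union_left),
    hs.2.trans Set.subset_union_left⟩

lemma union_cof_right {s t : Set ℕ} (ht : t ∈ Cof012) : s ∪ t ∈ Cof012 :=
  ⟨ht.1.subset (Set.compl_subset_compl.mpr Set.subset_union_right),
    ht.2.trans Set.subset_union_right⟩

lemma inter_union {x y z : Set ℕ} (h : x ∩ y ⊆ z) : (x ∪ z) ∩ (y ∪ z) = z := by
  ext n
  constructor
  · rintro ⟨hx | hz, hy | hz'⟩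
    · exact h ⟨hx, hy⟩
    all_goals assumption
  · intro hz; exact ⟨Or.inr hz, Or.inr hz⟩

lemma cof_choice {w z : Set ℕ} (hfin : w.Finite) (hzw : z ⊆ w)
    (h0 : (0:ℕ) ∈ z ∨ (0:ℕ) ∉ w) (h1 : (1:ℕ) ∈ z) (h2 : (2:ℕ) ∈ z ∨ (2:ℕ) ∉ w) :
    z ∪ wᶜ ∈ Cof012 ∧ (z ∪ wᶜ) ∩ w = z := by
  refine ⟨⟨hfin.subset ?_, ?_⟩, ?_⟩
  · intro n hn
    simp only [Set.mem_compl_iff, Set.mem_union, not_or, not_not] at hn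
    exact hn.2
  · intro n hn
    simp only [Set.mem_insert_iff, Set.mem_singleton_iff] at hn
    rcases hn with rfl | rfl | rfl
    · rcases h0 with h | h
      · exact Or.inl h
      · exact Or.inr h
    · exact Or.inl h1
    · rcases h2 with h | h
      · exact Or.inl h
      · exact Or.inr h
  · ext n
    constructor
    · rintro ⟨hz | hw, hw'⟩
      · exact hz
      · exact absurd hw' hw
    · intro hz; exact ⟨Or.inl hz, hzw hz⟩

lemma subset_cof {x z w : Set ℕ} (h : x ∩ w ⊆ z) : x ⊆ z ∪ wᶜ := fun n hn => by
  by_cases hw : n ∈ w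
  · exact Or.inl (h ⟨hn, hw⟩)
  · exact Or.inr hw

lemma c_1_1 : ({1} : Set ℕ) ∪ {1} = {1} := Set.union_self _
lemma c_01_1 : ({0, 1} : Set ℕ) ∪ {1} = {0, 1} :=
  Set.union_eq_self_of_subset_right (by simp)
lemma c_12_1 : ({1, 2} : Set ℕ) ∪ {1} = {1, 2} :=
  Set.union_eq_self_of_subset_right (by simp)
lemma c_1_01 : ({1} : Set ℕ) ∪ {0, 1} = {0, 1} :=
  Set.union_eq_self_of_subset_left (by simp)
lemma c_01_01 : ({0, 1} : Set ℕ) ∪ {0, 1} = {0, 1} := Set.union_self _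
lemma c_1_12 : ({1} : Set ℕ) ∪ {1, 2} = {1, 2} :=
  Set.union_eq_self_of_subset_left (by simp)
lemma c_12_12 : ({1, 2} : Set ℕ) ∪ {1, 2} = {1, 2} := Set.union_self _

set_option maxHeartbeats 1000000 in
/-- The upset `↑{1}` in `A` is a distributive meet-semilattice. -/
theorem upset_b_distributive :
    ∀ x ∈ SemiA, ∀ y ∈ SemiA, ∀ z ∈ SemiA,
      ({1} : Set ℕ) ⊆ x → ({1} : Set ℕ) ⊆ y → ({1} : Set ℕ) ⊆ z →
      x ∩ y ⊆ z →
      ∃ x' ∈ SemiA, ∃ y' ∈ SemiA, ({1} : Set ℕ) ⊆ x' ∧ ({1} : Set ℕ) ⊆ y' ∧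
        x ⊆ x' ∧ y ⊆ y' ∧ x' ∩ y' = z := by
  intro x hx y hy z hz hx1 hy1 hz1 hxyz
  have h1x : (1:ℕ) ∈ x := hx1 rfl
  have h1y : (1:ℕ) ∈ y := hy1 rfl
  have h1z : (1:ℕ) ∈ z := hz1 rfl
  have cx := mem_char hx h1x
  have cy := mem_char hy h1y
  have cz := mem_char hz h1z
  have good : x ∪ z ∈ SemiA → y ∪ z ∈ SemiA →
      ∃ x' ∈ SemiA, ∃ y' ∈ SemiA, ({1} : Set ℕ) ⊆ x' ∧ ({1} : Set ℕ) ⊆ y' ∧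
        x ⊆ x' ∧ y ⊆ y' ∧ x' ∩ y' = z := by
    intro hx' hy'
    exact ⟨x ∪ z, hx', y ∪ z, hy',
      Set.singleton_subset_iff.mpr (Or.inr h1z),
      Set.singleton_subset_iff.mpr (Or.inr h1z),
      Set.subset_union_left, Set.subset_union_left, inter_union hxyz⟩
  have badx : ∀ w : Set ℕ, w ∈ SemiA → w.Finite → y ⊆ w → z ⊆ w →
      ((0:ℕ) ∈ z ∨ (0:ℕ) ∉ w) → ((2:ℕ) ∈ z ∨ (2:ℕ) ∉ w) → x ∩ w ⊆ z →
      ∃ x' ∈ SemiA, ∃ y' ∈ SemiA, ({1} : Set ℕ) ⊆ x' ∧ ({1} : Set ℕ) ⊆ y' ∧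
        x ⊆ x' ∧ y ⊆ y' ∧ x' ∩ y' = z := by
    intro w hwA hwfin hyw hzw h0 h2 hxw
    obtain ⟨hmem, hint⟩ := cof_choice hwfin hzw h0 h1z h2
    exact ⟨z ∪ wᶜ, cof_semiA hmem, w, hwA,
      Set.singleton_subset_iff.mpr (Or.inl h1z),
      Set.singleton_subset_iff.mpr (hzw h1z),
      subset_cof hxw, hyw, hint⟩
  have bady : ∀ w : Set ℕ, w ∈ SemiA → w.Finite → x ⊆ w → z ⊆ w →
      ((0:ℕ) ∈ z ∨ (0:ℕ) ∉ w) → ((2:ℕ) ∈ z ∨ (2:ℕ) ∉ w) → y ∩ w ⊆ z →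
      ∃ x' ∈ SemiA, ∃ y' ∈ SemiA, ({1} : Set ℕ) ⊆ x' ∧ ({1} : Set ℕ) ⊆ y' ∧
        x ⊆ x' ∧ y ⊆ y' ∧ x' ∩ y' = z := by
    intro w hwA hwfin hxw hzw h0 h2 hyw
    obtain ⟨hmem, hint⟩ := cof_choice hwfin hzw h0 h1z h2
    exact ⟨w, hwA, z ∪ wᶜ, cof_semiA hmem,
      Set.singleton_subset_iff.mpr (hzw h1z),
      Set.singleton_subset_iff.mpr (Or.inl h1z),
      hxw, subset_cof hyw, by rw [Set.inter_comm]; exact hint⟩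
  rcases cz with hZ | hZ | hZ | hZ
  · -- z ∈ Fam1 : all unions stay in A
    have ux : ∀ {s : Set ℕ}, s ∈ Fam1 ∨ s ∈ Fam01 ∨ s ∈ Fam12 ∨ s ∈ Cof012 →
        s ∪ z ∈ SemiA := by
      rintro s (h | h | h | h)
      · obtain ⟨H, hH, he⟩ := u_gen h hZ
        exact fam1_semiA ⟨H, hH, by rw [he, c_1_1]⟩
      · obtain ⟨H, hH, he⟩ := u_gen h hZ
        exact fam01_semiA ⟨H, hH, by rw [he, c_01_1]⟩
      · obtain ⟨H, hH, he⟩ := u_gen h hZ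
        exact fam12_semiA ⟨H, hH, by rw [he, c_12_1]⟩
      · exact cof_semiA (union_cof_left h)
    exact good (ux cx) (ux cy)
  · -- z ∈ Fam01 : bad class is Fam12
    obtain ⟨zfin, h0z, h1z', h2nz⟩ := fam01_spec hZ
    have ux : ∀ {s : Set ℕ}, s ∈ Fam1 ∨ s ∈ Fam01 ∨ s ∈ Cof012 → s ∪ z ∈ SemiA := by
      rintro s (h | h | h)
      · obtain ⟨H, hH, he⟩ := u_gen h hZ
        exact fam01_semiA ⟨H, hH, by rw [he, c_1_01]⟩
      · obtain ⟨H, hH, he⟩ := u_gen h hZ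
        exact fam01_semiA ⟨H, hH, by rw [he, c_01_01]⟩
      · exact cof_semiA (union_cof_left h)
    have handle : (x ∈ Fam1 ∨ x ∈ Fam01 ∨ x ∈ Cof012) →
        ∃ x' ∈ SemiA, ∃ y' ∈ SemiA, ({1} : Set ℕ) ⊆ x' ∧ ({1} : Set ℕ) ⊆ y' ∧
          x ⊆ x' ∧ y ⊆ y' ∧ x' ∩ y' = z := by
      intro hxok
      have hxA : x ∪ z ∈ SemiA := ux hxok
      rcases cy with hY | hY | hY | hY
      · exact good hxA (ux (Or.inl hY))
      · exact good hxA (ux (Or.inr (Or.inl hY)))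
      · -- y ∈ Fam12 : use bady with w = x ∪ z
        obtain ⟨yfin, h1y', h2y, h0y⟩ := fam12_spec hY
        have h2nx : (2:ℕ) ∉ x := fun h => h2nz (hxyz ⟨h, h2y⟩)
        have hx' : x ∈ Fam1 ∨ x ∈ Fam01 := by
          rcases hxok with h | h | h
          · exact Or.inl h
          · exact Or.inr h
          · exact absurd (h.2 (by simp)) h2nx
        have hwfin : (x ∪ z).Finite := by
          rcases hx' with h | h
          · exact (fam1_spec h).1.union zfin
          · exact (fam01_spec h).1.union zfin
        refine bady (x ∪ z) hxA hwfin Set.subset_union_left Set.subset_union_right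
          (Or.inl h0z) (Or.inr ?_) ?_
        · rintro (h | h)
          · exact h2nx h
          · exact h2nz h
        · rintro n ⟨hny, hnx | hnz⟩
          · exact hxyz ⟨hnx, hny⟩
          · exact hnz
      · exact good hxA (ux (Or.inr (Or.inr hY)))
    rcases cx with hX | hX | hX | hX
    · exact handle (Or.inl hX)
    · exact handle (Or.inr (Or.inl hX))
    · -- x ∈ Fam12 : use badx with w = y ∪ z
      obtain ⟨xfin, h1x', h2x, h0x⟩ := fam12_spec hX
      have h2ny : (2:ℕ) ∉ y := fun h => h2nz (hxyz ⟨h2x, h⟩)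
      have hy' : y ∈ Fam1 ∨ y ∈ Fam01 := by
        rcases cy with h | h | h | h
        · exact Or.inl h
        · exact Or.inr h
        · exact absurd (fam12_spec h).2.2.1 h2ny
        · exact absurd (h.2 (by simp)) h2ny
      have hwA : y ∪ z ∈ SemiA := ux (hy'.elim Or.inl (fun h => Or.inr (Or.inl h)))
      have hwfin : (y ∪ z).Finite := by
        rcases hy' with h | h
        · exact (fam1_spec h).1.union zfin
        · exact (fam01_spec h).1.union zfin
      refine badx (y ∪ z) hwA hwfin Set.subset_union_left Set.subset_union_right
        (Or.inl h0z) (Or.inr ?_) ?_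
      · rintro (h | h)
        · exact h2ny h
        · exact h2nz h
      · rintro n ⟨hnx, hny | hnz⟩
        · exact hxyz ⟨hnx, hny⟩
        · exact hnz
    · exact handle (Or.inr (Or.inr hX))
  · -- z ∈ Fam12 : bad class is Fam01
    obtain ⟨zfin, h1z', h2z, h0nz⟩ := fam12_spec hZ
    have ux : ∀ {s : Set ℕ}, s ∈ Fam1 ∨ s ∈ Fam12 ∨ s ∈ Cof012 → s ∪ z ∈ SemiA := by
      rintro s (h | h | h)
      · obtain ⟨H, hH, he⟩ := u_gen h hZ
        exact fam12_semiA ⟨H, hH, by rw [he, c_1_12]⟩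
      · obtain ⟨H, hH, he⟩ := u_gen h hZ
        exact fam12_semiA ⟨H, hH, by rw [he, c_12_12]⟩
      · exact cof_semiA (union_cof_left h)
    have handle : (x ∈ Fam1 ∨ x ∈ Fam12 ∨ x ∈ Cof012) →
        ∃ x' ∈ SemiA, ∃ y' ∈ SemiA, ({1} : Set ℕ) ⊆ x' ∧ ({1} : Set ℕ) ⊆ y' ∧
          x ⊆ x' ∧ y ⊆ y' ∧ x' ∩ y' = z := by
      intro hxok
      have hxA : x ∪ z ∈ SemiA := ux hxok
      rcases cy with hY | hY | hY | hY
      · exact good hxA (ux (Or.inl hY))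
      · -- y ∈ Fam01 : use bady with w = x ∪ z
        obtain ⟨yfin, h0y, h1y', h2y⟩ := fam01_spec hY
        have h0nx : (0:ℕ) ∉ x := fun h => h0nz (hxyz ⟨h, h0y⟩)
        have hx' : x ∈ Fam1 ∨ x ∈ Fam12 := by
          rcases hxok with h | h | h
          · exact Or.inl h
          · exact Or.inr h
          · exact absurd (h.2 (by simp)) h0nx
        have hwfin : (x ∪ z).Finite := by
          rcases hx' with h | h
          · exact (fam1_spec h).1.union zfin
          · exact (fam12_spec h).1.union zfin
        refine bady (x ∪ z) hxA hwfin Set.subset_union_left Set.subset_union_right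
          (Or.inr ?_) (Or.inl h2z) ?_
        · rintro (h | h)
          · exact h0nx h
          · exact h0nz h
        · rintro n ⟨hny, hnx | hnz⟩
          · exact hxyz ⟨hnx, hny⟩
          · exact hnz
      · exact good hxA (ux (Or.inr (Or.inl hY)))
      · exact good hxA (ux (Or.inr (Or.inr hY)))
    rcases cx with hX | hX | hX | hX
    · exact handle (Or.inl hX)
    · -- x ∈ Fam01 : use badx with w = y ∪ z
      obtain ⟨xfin, h0x, h1x', h2x⟩ := fam01_spec hX
      have h0ny : (0:ℕ) ∉ y := fun h => h0nz (hxyz ⟨h0x, h⟩)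
      have hy' : y ∈ Fam1 ∨ y ∈ Fam12 := by
        rcases cy with h | h | h | h
        · exact Or.inl h
        · exact absurd (fam01_spec h).2.1 h0ny
        · exact Or.inr h
        · exact absurd (h.2 (by simp)) h0ny
      have hwA : y ∪ z ∈ SemiA := ux (hy'.elim Or.inl (fun h => Or.inr (Or.inl h)))
      have hwfin : (y ∪ z).Finite := by
        rcases hy' with h | h
        · exact (fam1_spec h).1.union zfin
        · exact (fam12_spec h).1.union zfin
      refine badx (y ∪ z) hwA hwfin Set.subset_union_left Set.subset_union_right
        (Or.inr ?_) (Or.inl h2z) ?_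
      · rintro (h | h)
        · exact h0ny h
        · exact h0nz h
      · rintro n ⟨hnx, hny | hnz⟩
        · exact hxyz ⟨hnx, hny⟩
        · exact hnz
    · exact handle (Or.inr (Or.inl hX))
    · exact handle (Or.inr (Or.inr hX))
  · -- z ∈ Cof012
    exact good (cof_semiA (union_cof_right hZ)) (cof_semiA (union_cof_right hZ))
end

section
/- The meet-semilattice A is distributive: for all x, y, z ∈ A with x ∩ y ⊆ z there exist x', y' ∈ A with x ⊆ x', y ⊆ y', and x' ∩ y' = z. -/
/-- Characterization of the "finite type" members of `SemiA`. -/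
def Good (s : Set ℕ) : Prop := s.Finite ∧ (2 ∈ s → 1 ∈ s) ∧ ¬(0 ∈ s ∧ 2 ∈ s)

lemma good_mem_semiA {s : Set ℕ} (h : Good s) : s ∈ SemiA := by
  obtain ⟨hfin, h21, h02⟩ := h
  have hF : s ∩ {n | 3 ≤ n} ∈ Fam :=
    ⟨hfin.subset Set.inter_subset_left, fun n hn => hn.2⟩
  by_cases h0 : 0 ∈ s <;> by_cases h1 : 1 ∈ s <;> by_cases h2 : 2 ∈ s
  · exact absurd ⟨h0, h2⟩ h02
  · -- {0,1}
    refine Or.inl (Or.inl (Or.inr ⟨_, hF, ?_⟩))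
    ext n
    simp only [Set.mem_union, Set.mem_inter_iff, Set.mem_setOf_eq, Set.mem_insert_iff,
      Set.mem_singleton_iff]
    constructor
    · intro hn
      rcases Nat.lt_or_ge n 3 with h | h
      · interval_cases n <;> simp_all
      · exact Or.inl ⟨hn, h⟩
    · rintro (⟨hn, _⟩ | rfl | rfl) <;> assumption
  · exact absurd ⟨h0, h2⟩ h02
  · -- {0}
    refine Or.inl (Or.inl (Or.inl (Or.inl (Or.inr ⟨_, hF, ?_⟩))))
    ext n
    simp only [Set.mem_union, Set.mem_inter_iff, Set.mem_setOf_eq, Set.mem_singleton_iff]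
    constructor
    · intro hn
      rcases Nat.lt_or_ge n 3 with h | h
      · interval_cases n <;> simp_all
      · exact Or.inl ⟨hn, h⟩
    · rintro (⟨hn, _⟩ | rfl) <;> assumption
  · -- {1,2}
    refine Or.inl (Or.inr ⟨_, hF, ?_⟩)
    ext n
    simp only [Set.mem_union, Set.mem_inter_iff, Set.mem_setOf_eq, Set.mem_insert_iff,
      Set.mem_singleton_iff]
    constructor
    · intro hn
      rcases Nat.lt_or_ge n 3 with h | h
      · interval_cases n <;> simp_all
      · exact Or.inl ⟨hn, h⟩
    · rintro (⟨hn, _⟩ | rfl | rfl) <;> assumption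
  · -- {1}
    refine Or.inl (Or.inl (Or.inl (Or.inr ⟨_, hF, ?_⟩)))
    ext n
    simp only [Set.mem_union, Set.mem_inter_iff, Set.mem_setOf_eq, Set.mem_singleton_iff]
    constructor
    · intro hn
      rcases Nat.lt_or_ge n 3 with h | h
      · interval_cases n <;> simp_all
      · exact Or.inl ⟨hn, h⟩
    · rintro (⟨hn, _⟩ | rfl) <;> assumption
  · exact absurd (h21 h2) h1
  · -- ∅
    refine Or.inl (Or.inl (Or.inl (Or.inl (Or.inl ⟨hfin, fun n hn => ?_⟩))))
    rcases Nat.lt_or_ge n 3 with h | h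
    · interval_cases n <;> simp_all
    · exact h

lemma cof_mem_semiA {s : Set ℕ} (hc : sᶜ.Finite) (h0 : 0 ∈ s) (h1 : 1 ∈ s) (h2 : 2 ∈ s) :
    s ∈ SemiA := by
  refine Or.inr ⟨hc, ?_⟩
  intro n hn
  simp only [Set.mem_insert_iff, Set.mem_singleton_iff] at hn
  rcases hn with rfl | rfl | rfl <;> assumption

lemma fam_not_small {F : Set ℕ} (hF : F ∈ Fam) : 0 ∉ F ∧ 1 ∉ F ∧ 2 ∉ F :=
  ⟨fun h => by have := hF.2 0 h; omega, fun h => by have := hF.2 1 h; omega,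
   fun h => by have := hF.2 2 h; omega⟩

lemma semiA_cases {s : Set ℕ} (h : s ∈ SemiA) :
    Good s ∨ (sᶜ.Finite ∧ 0 ∈ s ∧ 1 ∈ s ∧ 2 ∈ s) := by
  rcases h with ((((h | h) | h) | h) | h) | h
  · exact Or.inl ⟨h.1, fun h2 => absurd (h.2 2 h2) (by omega),
      fun ⟨_, h2⟩ => absurd (h.2 2 h2) (by omega)⟩
  · obtain ⟨F, hF, rfl⟩ := h
    obtain ⟨f0, f1, f2⟩ := fam_not_small hF
    refine Or.inl ⟨hF.1.union (Set.finite_singleton 0), ?_, ?_⟩ <;> simp_all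
  · obtain ⟨F, hF, rfl⟩ := h
    obtain ⟨f0, f1, f2⟩ := fam_not_small hF
    refine Or.inl ⟨hF.1.union (Set.finite_singleton 1), ?_, ?_⟩ <;> simp_all
  · obtain ⟨F, hF, rfl⟩ := h
    obtain ⟨f0, f1, f2⟩ := fam_not_small hF
    refine Or.inl ⟨hF.1.union (by simp : ({0, 1} : Set ℕ).Finite), ?_, ?_⟩ <;> simp_all
  · obtain ⟨F, hF, rfl⟩ := h
    obtain ⟨f0, f1, f2⟩ := fam_not_small hF
    refine Or.inl ⟨hF.1.union (by simp : ({1, 2} : Set ℕ).Finite), ?_, ?_⟩ <;> simp_all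
  · exact Or.inr ⟨h.1, h.2 (by simp), h.2 (by simp), h.2 (by simp)⟩

lemma good_union {a b : Set ℕ} (ha : Good a) (hb : Good b)
    (hab : ¬((0 ∈ a ∧ 2 ∈ b) ∨ (2 ∈ a ∧ 0 ∈ b))) : Good (a ∪ b) := by
  obtain ⟨haf, ha21, ha02⟩ := ha
  obtain ⟨hbf, hb21, hb02⟩ := hb
  refine ⟨haf.union hbf, ?_, ?_⟩ <;> simp only [Set.mem_union] <;> tauto

/-- Key lemma: the case where `x'` is made cofinite. -/
lemma lemB {x y z : Set ℕ} (hz : Good z) (hyz : Good (y ∪ z)) (hsub : x ∩ y ⊆ z)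
    (e0 : 0 ∈ y → 0 ∈ x ∪ z) (e1 : 1 ∈ y → 1 ∈ x ∪ z) (e2 : 2 ∈ y → 2 ∈ x ∪ z) :
    ∃ x' ∈ SemiA, ∃ y' ∈ SemiA, x ⊆ x' ∧ y ⊆ y' ∧ x' ∩ y' = z := by
  refine ⟨x ∪ z ∪ (y ∪ z)ᶜ, ?_, y ∪ z, good_mem_semiA hyz, ?_, ?_, ?_⟩
  · apply cof_mem_semiA
    · apply hyz.1.subset
      intro n hn
      simp only [Set.mem_compl_iff, Set.mem_union, not_or, not_not] at hn
      tauto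
    · by_cases h : 0 ∈ y ∪ z
      · rcases h with h | h
        · exact Or.inl (e0 h)
        · exact Or.inl (Or.inr h)
      · exact Or.inr h
    · by_cases h : 1 ∈ y ∪ z
      · rcases h with h | h
        · exact Or.inl (e1 h)
        · exact Or.inl (Or.inr h)
      · exact Or.inr h
    · by_cases h : 2 ∈ y ∪ z
      · rcases h with h | h
        · exact Or.inl (e2 h)
        · exact Or.inl (Or.inr h)
      · exact Or.inr h
  · exact fun a ha => Or.inl (Or.inl ha)
  · exact fun a ha => Or.inl ha
  · ext n
    have hn := @hsub n
    simp only [Set.mem_inter_iff, Set.mem_union, Set.mem_compl_iff, not_or] at hn ⊢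
    tauto

/-- The meet-semilattice `A` is distributive. -/
theorem semiA_distributive :
    ∀ x ∈ SemiA, ∀ y ∈ SemiA, ∀ z ∈ SemiA, x ∩ y ⊆ z →
      ∃ x' ∈ SemiA, ∃ y' ∈ SemiA, x ⊆ x' ∧ y ⊆ y' ∧ x' ∩ y' = z := by
  intro x hx y hy z hz hsub
  rcases semiA_cases hz with hzg | ⟨hzc, hz0, hz1, hz2⟩
  swap
  · -- z cofinite: x' = x ∪ z, y' = y ∪ z
    refine ⟨x ∪ z, ?_, y ∪ z, ?_, Set.subset_union_left, Set.subset_union_left, ?_⟩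
    · refine cof_mem_semiA (hzc.subset ?_) (Or.inr hz0) (Or.inr hz1) (Or.inr hz2)
      intro n hn
      simp only [Set.mem_compl_iff, Set.mem_union, not_or] at hn ⊢
      exact hn.2
    · refine cof_mem_semiA (hzc.subset ?_) (Or.inr hz0) (Or.inr hz1) (Or.inr hz2)
      intro n hn
      simp only [Set.mem_compl_iff, Set.mem_union, not_or] at hn ⊢
      exact hn.2
    · ext n
      have hn := @hsub n
      simp only [Set.mem_inter_iff, Set.mem_union] at hn ⊢
      tauto
  · rcases semiA_cases hx with hxg | ⟨hxc, hx0, hx1, hx2⟩ <;>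
      rcases semiA_cases hy with hyg | ⟨hyc, hy0, hy1, hy2⟩
    · -- both Good
      by_cases hbx : (0 ∈ x ∧ 2 ∈ z) ∨ (2 ∈ x ∧ 0 ∈ z)
      · -- x must be made cofinite
        have hyzg : Good (y ∪ z) := by
          refine ⟨hyg.1.union hzg.1, ?_, ?_⟩
          · rintro (h | h)
            · exact Or.inl (hyg.2.1 h)
            · exact Or.inr (hzg.2.1 h)
          · rintro ⟨h0 | h0, h2 | h2⟩
            · rcases hbx with ⟨hb0, hb2⟩ | ⟨hb2, hb0⟩
              · exact hzg.2.2 ⟨hsub ⟨hb0, h0⟩, hb2⟩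
              · exact hzg.2.2 ⟨hb0, hsub ⟨hb2, h2⟩⟩
            · rcases hbx with ⟨hb0, hb2⟩ | ⟨hb2, hb0⟩
              · exact hzg.2.2 ⟨hsub ⟨hb0, h0⟩, hb2⟩
              · exact hzg.2.2 ⟨hb0, h2⟩
            · rcases hbx with ⟨hb0, hb2⟩ | ⟨hb2, hb0⟩
              · exact hzg.2.2 ⟨h0, hb2⟩
              · exact hzg.2.2 ⟨hb0, hsub ⟨hb2, h2⟩⟩
            · exact hzg.2.2 ⟨h0, h2⟩
        rcases hbx with ⟨hb0, hb2⟩ | ⟨hb2, hb0⟩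
        · exact lemB hzg hyzg hsub (fun _ => Or.inl hb0)
            (fun _ => Or.inr (hzg.2.1 hb2)) (fun _ => Or.inr hb2)
        · exact lemB hzg hyzg hsub (fun _ => Or.inr hb0)
            (fun _ => Or.inl (hxg.2.1 hb2)) (fun _ => Or.inl hb2)
      · by_cases hby : (0 ∈ y ∧ 2 ∈ z) ∨ (2 ∈ y ∧ 0 ∈ z)
        · -- y must be made cofinite: use lemB with roles swapped
          have hsub' : y ∩ x ⊆ z := fun n hn => hsub ⟨hn.2, hn.1⟩
          have hxzg : Good (x ∪ z) := good_union hxg hzg hbx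
          have key : ∃ y' ∈ SemiA, ∃ x' ∈ SemiA, y ⊆ y' ∧ x ⊆ x' ∧ y' ∩ x' = z := by
            rcases hby with ⟨hb0, hb2⟩ | ⟨hb2, hb0⟩
            · exact lemB hzg hxzg hsub' (fun h => Or.inr (hsub ⟨h, hb0⟩))
                (fun _ => Or.inr (hzg.2.1 hb2)) (fun _ => Or.inr hb2)
            · exact lemB hzg hxzg hsub' (fun _ => Or.inr hb0)
                (fun _ => Or.inl (hyg.2.1 hb2)) (fun h => Or.inr (hsub ⟨h, hb2⟩))
          obtain ⟨y', hy', x', hx', hyy, hxx, heq⟩ := key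
          exact ⟨x', hx', y', hy', hxx, hyy, by rw [Set.inter_comm]; exact heq⟩
        · -- neither bad: x' = x ∪ z, y' = y ∪ z, both Good
          refine ⟨x ∪ z, good_mem_semiA (good_union hxg hzg hbx), y ∪ z,
            good_mem_semiA (good_union hyg hzg hby),
            Set.subset_union_left, Set.subset_union_left, ?_⟩
          ext n
          have hn := @hsub n
          simp only [Set.mem_inter_iff, Set.mem_union] at hn ⊢
          tauto
    · -- x Good, y cofinite: swap roles, y goes cofinite
      have hsub' : y ∩ x ⊆ z := fun n hn => hsub ⟨hn.2, hn.1⟩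
      have hxzg : Good (x ∪ z) := by
        refine ⟨hxg.1.union hzg.1, ?_, ?_⟩
        · rintro (h | h)
          · exact Or.inl (hxg.2.1 h)
          · exact Or.inr (hzg.2.1 h)
        · rintro ⟨h0 | h0, h2 | h2⟩
          · exact hzg.2.2 ⟨hsub ⟨h0, hy0⟩, hsub ⟨h2, hy2⟩⟩
          · exact hzg.2.2 ⟨hsub ⟨h0, hy0⟩, h2⟩
          · exact hzg.2.2 ⟨h0, hsub ⟨h2, hy2⟩⟩
          · exact hzg.2.2 ⟨h0, h2⟩
      have key : ∃ y' ∈ SemiA, ∃ x' ∈ SemiA, y ⊆ y' ∧ x ⊆ x' ∧ y' ∩ x' = z :=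
        lemB hzg hxzg hsub' (fun _ => Or.inl hy0) (fun _ => Or.inl hy1)
          (fun _ => Or.inl hy2)
      obtain ⟨y', hy', x', hx', hyy, hxx, heq⟩ := key
      exact ⟨x', hx', y', hy', hxx, hyy, by rw [Set.inter_comm]; exact heq⟩
    · -- x cofinite, y Good
      have hyzg : Good (y ∪ z) := by
        refine ⟨hyg.1.union hzg.1, ?_, ?_⟩
        · rintro (h | h)
          · exact Or.inl (hyg.2.1 h)
          · exact Or.inr (hzg.2.1 h)
        · rintro ⟨h0 | h0, h2 | h2⟩
          · exact hzg.2.2 ⟨hsub ⟨hx0, h0⟩, hsub ⟨hx2, h2⟩⟩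
          · exact hzg.2.2 ⟨hsub ⟨hx0, h0⟩, h2⟩
          · exact hzg.2.2 ⟨h0, hsub ⟨hx2, h2⟩⟩
          · exact hzg.2.2 ⟨h0, h2⟩
      exact lemB hzg hyzg hsub (fun _ => Or.inl hx0) (fun _ => Or.inl hx1)
        (fun _ => Or.inl hx2)
    · -- both cofinite: contradiction with z Good (finite)
      exfalso
      have h1 : (x ∩ y).Finite := hzg.1.subset hsub
      have h2 : (x ∩ y)ᶜ.Finite := by
        rw [Set.compl_inter]
        exact hxc.union hyc
      have : (Set.univ : Set ℕ).Finite := by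
        rw [← Set.union_compl_self (x ∩ y)]
        exact h1.union h2
      exact Set.infinite_univ this
end

section
/- There exists a bounded distributive meet-semilattice A with elements a, b such that a ∧ b is the bottom element, ↑a and ↑b are both meet-subfit, but A itself is not meet-subfit. Consequently, the set of meet-subfit elements of a distributive meet-semilattice need not be a filter. -/
/-- A subset `S` of a meet-semilattice, with least element `z₀`, is meet-subfit
if whenever `x, y ∈ S` and `y ≰ x` there is `z ∈ S` with `x ⊓ z = z₀` and
`y ⊓ z ≠ z₀`. -/
def MeetSubfitOn {A : Type} [SemilatticeInf A] (S : Set A) (z₀ : A) : Prop :=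
  ∀ x ∈ S, ∀ y ∈ S, ¬ y ≤ x → ∃ z ∈ S, x ⊓ z = z₀ ∧ y ⊓ z ≠ z₀

def Stmt12Body (A : Type) [SemilatticeInf A] [BoundedOrder A] (a b : A) : Prop :=
  -- A is a distributive meet-semilattice
  (∀ x y z : A, x ⊓ y ≤ z → ∃ x' y' : A, x ≤ x' ∧ y ≤ y' ∧ x' ⊓ y' = z) ∧
  -- a ⊓ b is the bottom element
  a ⊓ b = ⊥ ∧
  -- ↑a is meet-subfit (with bottom a)
  MeetSubfitOn {x | a ≤ x} a ∧
  -- ↑b is meet-subfit (with bottom b)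
  MeetSubfitOn {x | b ≤ x} b ∧
  -- A itself is not meet-subfit
  ¬ MeetSubfitOn (Set.univ : Set A) ⊥

namespace Stmt12Example

@[ext]
structure C where
  u : Prop
  v : Prop
  p : Prop
  q : Prop
  R : Set ℕ

def Ok (x : C) : Prop :=
  (x.u → x.p) ∧ (x.v → x.q) ∧ ((x.u ∧ x.v) → x.Rᶜ.Finite) ∧ (¬(x.u ∧ x.v) → x.R.Finite)

instance instPO : PartialOrder C where
  le x y := (x.u → y.u) ∧ (x.v → y.v) ∧ (x.p → y.p) ∧ (x.q → y.q) ∧ x.R ⊆ y.R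
  le_refl x := ⟨id, id, id, id, subset_rfl⟩
  le_trans x y z h h' := ⟨fun a => h'.1 (h.1 a), fun a => h'.2.1 (h.2.1 a),
    fun a => h'.2.2.1 (h.2.2.1 a), fun a => h'.2.2.2.1 (h.2.2.2.1 a),
    h.2.2.2.2.trans h'.2.2.2.2⟩
  le_antisymm x y h h' := by
    ext1
    · exact propext ⟨h.1, h'.1⟩
    · exact propext ⟨h.2.1, h'.2.1⟩
    · exact propext ⟨h.2.2.1, h'.2.2.1⟩
    · exact propext ⟨h.2.2.2.1, h'.2.2.2.1⟩
    · exact subset_antisymm h.2.2.2.2 h'.2.2.2.2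

instance instSI : SemilatticeInf C where
  inf x y := ⟨x.u ∧ y.u, x.v ∧ y.v, x.p ∧ y.p, x.q ∧ y.q, x.R ∩ y.R⟩
  inf_le_left x y := ⟨And.left, And.left, And.left, And.left, Set.inter_subset_left⟩
  inf_le_right x y := ⟨And.right, And.right, And.right, And.right, Set.inter_subset_right⟩
  le_inf x y z h h' := ⟨fun a => ⟨h.1 a, h'.1 a⟩, fun a => ⟨h.2.1 a, h'.2.1 a⟩,
    fun a => ⟨h.2.2.1 a, h'.2.2.1 a⟩, fun a => ⟨h.2.2.2.1 a, h'.2.2.2.1 a⟩,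
    Set.subset_inter h.2.2.2.2 h'.2.2.2.2⟩

lemma ok_inf {x y : C} (hx : Ok x) (hy : Ok y) : Ok (x ⊓ y) := by
  refine ⟨fun h => ⟨hx.1 h.1, hy.1 h.2⟩, fun h => ⟨hx.2.1 h.1, hy.2.1 h.2⟩, ?_, ?_⟩
  · rintro ⟨⟨hxu, hyu⟩, hxv, hyv⟩
    have h1 := hx.2.2.1 ⟨hxu, hxv⟩
    have h2 := hy.2.2.1 ⟨hyu, hyv⟩
    show ((x.R ∩ y.R)ᶜ).Finite
    rw [Set.compl_inter]
    exact h1.union h2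
  · intro h
    show (x.R ∩ y.R).Finite
    by_cases hxb : x.u ∧ x.v
    · by_cases hyb : y.u ∧ y.v
      · exact absurd ⟨⟨hxb.1, hyb.1⟩, hxb.2, hyb.2⟩ h
      · exact ((hy.2.2.2 hyb).inter_of_right _)
    · exact ((hx.2.2.2 hxb).inter_of_left _)

abbrev A := {x : C // Ok x}

noncomputable instance instA : SemilatticeInf A :=
  Subtype.semilatticeInf (fun {x y} hx hy => ok_inf hx hy)

def okBot : Ok ⟨False, False, False, False, ∅⟩ :=
  ⟨False.elim, False.elim, fun h => absurd h.1 id, fun _ => Set.finite_empty⟩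

def okTop : Ok ⟨True, True, True, True, Set.univ⟩ :=
  ⟨fun _ => trivial, fun _ => trivial, fun _ => by simp, fun h => absurd ⟨trivial, trivial⟩ h⟩

noncomputable instance instB : BoundedOrder A where
  top := ⟨⟨True, True, True, True, Set.univ⟩, okTop⟩
  le_top x := ⟨fun _ => trivial, fun _ => trivial, fun _ => trivial, fun _ => trivial,
    Set.subset_univ _⟩
  bot := ⟨⟨False, False, False, False, ∅⟩, okBot⟩
  bot_le x := ⟨False.elim, False.elim, False.elim, False.elim, Set.empty_subset _⟩

def okA : Ok ⟨True, False, True, False, ∅⟩ :=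
  ⟨fun _ => trivial, False.elim, fun h => absurd h.2 id, fun _ => Set.finite_empty⟩

def okB : Ok ⟨False, True, False, True, ∅⟩ :=
  ⟨False.elim, fun _ => trivial, fun h => absurd h.1 id, fun _ => Set.finite_empty⟩

noncomputable def a : A := ⟨⟨True, False, True, False, ∅⟩, okA⟩
noncomputable def b : A := ⟨⟨False, True, False, True, ∅⟩, okB⟩

lemma le_def (x y : A) : x ≤ y ↔
    (x.1.u → y.1.u) ∧ (x.1.v → y.1.v) ∧ (x.1.p → y.1.p) ∧ (x.1.q → y.1.q) ∧ x.1.R ⊆ y.1.R :=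
  Iff.rfl

lemma inf_def (x y : A) : (x ⊓ y).1 =
    ⟨x.1.u ∧ y.1.u, x.1.v ∧ y.1.v, x.1.p ∧ y.1.p, x.1.q ∧ y.1.q, x.1.R ∩ y.1.R⟩ :=
  rfl

lemma eq_iff (x y : A) : x = y ↔
    ((x.1.u ↔ y.1.u) ∧ (x.1.v ↔ y.1.v) ∧ (x.1.p ↔ y.1.p) ∧ (x.1.q ↔ y.1.q) ∧ x.1.R = y.1.R) := by
  constructor
  · rintro rfl; exact ⟨Iff.rfl, Iff.rfl, Iff.rfl, Iff.rfl, rfl⟩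
  · rintro ⟨h1, h2, h3, h4, h5⟩
    apply Subtype.ext
    ext1 <;> [exact propext h1; exact propext h2; exact propext h3; exact propext h4; exact h5]

end Stmt12Example

open Stmt12Example in
/-- There is a bounded distributive meet-semilattice `A` with `a ⊓ b = ⊥` such
that `↑a` and `↑b` are meet-subfit, but `A` is not meet-subfit. -/
theorem exists_distrib_semilattice_subfit_not_filter :
    ∃ (A : Type) (i₁ : SemilatticeInf A)
      (i₂ : @BoundedOrder A i₁.toPartialOrder.toPreorder.toLE) (a b : A),
      @Stmt12Body A i₁ i₂ a b := by
  refine ⟨A, instA, instB, a, b, ?_, ?_, ?_, ?_, ?_⟩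
  · -- distributivity
    intro x y z h
    rw [le_def] at h
    obtain ⟨hu, hv, hp, hq, hR⟩ := h
    by_cases hz : z.1.u ∧ z.1.v
    · -- z in the top layer: z.R is cofinite
      have hzRc : z.1.Rᶜ.Finite := z.2.2.2.1 hz
      have okx' : Ok ⟨True, True, True, True, z.1.R ∪ x.1.R⟩ :=
        ⟨fun _ => trivial, fun _ => trivial,
         fun _ => hzRc.subset (by rw [Set.compl_union]; exact Set.inter_subset_left),
         fun hh => absurd ⟨trivial, trivial⟩ hh⟩
      have oky' : Ok ⟨True, True, True, True, z.1.R ∪ y.1.R⟩ :=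
        ⟨fun _ => trivial, fun _ => trivial,
         fun _ => hzRc.subset (by rw [Set.compl_union]; exact Set.inter_subset_left),
         fun hh => absurd ⟨trivial, trivial⟩ hh⟩
      refine ⟨⟨_, okx'⟩, ⟨_, oky'⟩, ?_, ?_, ?_⟩
      · exact ⟨fun _ => trivial, fun _ => trivial, fun _ => trivial, fun _ => trivial,
          Set.subset_union_right⟩
      · exact ⟨fun _ => trivial, fun _ => trivial, fun _ => trivial, fun _ => trivial,
          Set.subset_union_right⟩
      · rw [eq_iff]
        refine ⟨⟨fun _ => hz.1, fun _ => ⟨trivial, trivial⟩⟩,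
          ⟨fun _ => hz.2, fun _ => ⟨trivial, trivial⟩⟩,
          ⟨fun _ => z.2.1 hz.1, fun _ => ⟨trivial, trivial⟩⟩,
          ⟨fun _ => z.2.2.1 hz.2, fun _ => ⟨trivial, trivial⟩⟩, ?_⟩
        show (z.1.R ∪ x.1.R) ∩ (z.1.R ∪ y.1.R) = z.1.R
        apply Set.Subset.antisymm
        · rintro t ⟨h1 | h1, h2 | h2⟩
          · exact h1
          · exact h1
          · exact h2
          · exact hR ⟨h1, h2⟩
        · exact fun t ht => ⟨Or.inl ht, Or.inl ht⟩
    · -- z lower: z.R is finite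
      have hzfin : z.1.R.Finite := z.2.2.2.2 hz
      by_cases hxs : (x.1.u ∨ z.1.u) ∧ (x.1.v ∨ z.1.v)
      · -- bump the x side into the top layer
        have huy : y.1.u → z.1.u := fun hyu => hxs.1.elim (fun hxu => hu ⟨hxu, hyu⟩) id
        have hvy : y.1.v → z.1.v := fun hyv => hxs.2.elim (fun hxv => hv ⟨hxv, hyv⟩) id
        have hpy : y.1.p → z.1.p := fun hyp =>
          hxs.1.elim (fun hxu => hp ⟨x.2.1 hxu, hyp⟩) (fun hzu => z.2.1 hzu)
        have hqy : y.1.q → z.1.q := fun hyq =>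
          hxs.2.elim (fun hxv => hq ⟨x.2.2.1 hxv, hyq⟩) (fun hzv => z.2.2.1 hzv)
        have hyfin : y.1.R.Finite := y.2.2.2.2 (fun hh => hz ⟨huy hh.1, hvy hh.2⟩)
        have okx' : Ok ⟨True, True, True, True, (y.1.R \ z.1.R)ᶜ⟩ :=
          ⟨fun _ => trivial, fun _ => trivial,
           fun _ => by rw [compl_compl]; exact hyfin.subset Set.diff_subset,
           fun hh => absurd ⟨trivial, trivial⟩ hh⟩
        have oky' : Ok ⟨z.1.u, z.1.v, z.1.p, z.1.q, y.1.R ∪ z.1.R⟩ :=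
          ⟨z.2.1, z.2.2.1, fun hb => absurd hb hz, fun _ => hyfin.union hzfin⟩
        refine ⟨⟨_, okx'⟩, ⟨_, oky'⟩, ?_, ?_, ?_⟩
        · exact ⟨fun _ => trivial, fun _ => trivial, fun _ => trivial, fun _ => trivial,
            fun t ht hd => hd.2 (hR ⟨ht, hd.1⟩)⟩
        · exact ⟨huy, hvy, hpy, hqy, Set.subset_union_left⟩
        · rw [eq_iff]
          refine ⟨⟨And.right, fun hh => ⟨trivial, hh⟩⟩, ⟨And.right, fun hh => ⟨trivial, hh⟩⟩,
            ⟨And.right, fun hh => ⟨trivial, hh⟩⟩, ⟨And.right, fun hh => ⟨trivial, hh⟩⟩, ?_⟩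
          show (y.1.R \ z.1.R)ᶜ ∩ (y.1.R ∪ z.1.R) = z.1.R
          apply Set.Subset.antisymm
          · rintro t ⟨hc, hm | hm⟩
            · by_contra htz
              exact hc ⟨hm, htz⟩
            · exact hm
          · exact fun t ht => ⟨fun hd => hd.2 ht, Or.inr ht⟩
      · by_cases hys : (y.1.u ∨ z.1.u) ∧ (y.1.v ∨ z.1.v)
        · -- bump the y side into the top layer
          have hux : x.1.u → z.1.u := fun hxu => hys.1.elim (fun hyu => hu ⟨hxu, hyu⟩) id
          have hvx : x.1.v → z.1.v := fun hxv => hys.2.elim (fun hyv => hv ⟨hxv, hyv⟩) id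
          have hpx : x.1.p → z.1.p := fun hxp =>
            hys.1.elim (fun hyu => hp ⟨hxp, y.2.1 hyu⟩) (fun hzu => z.2.1 hzu)
          have hqx : x.1.q → z.1.q := fun hxq =>
            hys.2.elim (fun hyv => hq ⟨hxq, y.2.2.1 hyv⟩) (fun hzv => z.2.2.1 hzv)
          have hxfin : x.1.R.Finite := x.2.2.2.2 (fun hh => hz ⟨hux hh.1, hvx hh.2⟩)
          have okx' : Ok ⟨z.1.u, z.1.v, z.1.p, z.1.q, x.1.R ∪ z.1.R⟩ :=
            ⟨z.2.1, z.2.2.1, fun hb => absurd hb hz, fun _ => hxfin.union hzfin⟩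
          have oky' : Ok ⟨True, True, True, True, (x.1.R \ z.1.R)ᶜ⟩ :=
            ⟨fun _ => trivial, fun _ => trivial,
             fun _ => by rw [compl_compl]; exact hxfin.subset Set.diff_subset,
             fun hh => absurd ⟨trivial, trivial⟩ hh⟩
          refine ⟨⟨_, okx'⟩, ⟨_, oky'⟩, ?_, ?_, ?_⟩
          · exact ⟨hux, hvx, hpx, hqx, Set.subset_union_left⟩
          · exact ⟨fun _ => trivial, fun _ => trivial, fun _ => trivial, fun _ => trivial,
              fun t ht hd => hd.2 (hR ⟨hd.1, ht⟩)⟩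
          · rw [eq_iff]
            refine ⟨⟨And.left, fun hh => ⟨hh, trivial⟩⟩, ⟨And.left, fun hh => ⟨hh, trivial⟩⟩,
              ⟨And.left, fun hh => ⟨hh, trivial⟩⟩, ⟨And.left, fun hh => ⟨hh, trivial⟩⟩, ?_⟩
            show (x.1.R ∪ z.1.R) ∩ (x.1.R \ z.1.R)ᶜ = z.1.R
            apply Set.Subset.antisymm
            · rintro t ⟨hm | hm, hc⟩
              · by_contra htz
                exact hc ⟨hm, htz⟩
              · exact hm
            · exact fun t ht => ⟨Or.inr ht, fun hd => hd.2 ht⟩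
        · -- both sides stay in lower layers
          have hxfin : x.1.R.Finite := x.2.2.2.2 (fun hh => hxs ⟨Or.inl hh.1, Or.inl hh.2⟩)
          have hyfin : y.1.R.Finite := y.2.2.2.2 (fun hh => hys ⟨Or.inl hh.1, Or.inl hh.2⟩)
          have okx' : Ok ⟨x.1.u ∨ z.1.u, x.1.v ∨ z.1.v, x.1.p ∨ z.1.p, x.1.q ∨ z.1.q,
              x.1.R ∪ z.1.R⟩ :=
            ⟨fun hh => hh.elim (fun hh2 => Or.inl (x.2.1 hh2)) (fun hh2 => Or.inr (z.2.1 hh2)),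
             fun hh => hh.elim (fun hh2 => Or.inl (x.2.2.1 hh2)) (fun hh2 => Or.inr (z.2.2.1 hh2)),
             fun hb => absurd hb hxs, fun _ => hxfin.union hzfin⟩
          have oky' : Ok ⟨y.1.u ∨ z.1.u, y.1.v ∨ z.1.v, y.1.p ∨ z.1.p, y.1.q ∨ z.1.q,
              y.1.R ∪ z.1.R⟩ :=
            ⟨fun hh => hh.elim (fun hh2 => Or.inl (y.2.1 hh2)) (fun hh2 => Or.inr (z.2.1 hh2)),
             fun hh => hh.elim (fun hh2 => Or.inl (y.2.2.1 hh2)) (fun hh2 => Or.inr (z.2.2.1 hh2)),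
             fun hb => absurd hb hys, fun _ => hyfin.union hzfin⟩
          refine ⟨⟨_, okx'⟩, ⟨_, oky'⟩, ?_, ?_, ?_⟩
          · exact ⟨Or.inl, Or.inl, Or.inl, Or.inl, Set.subset_union_left⟩
          · exact ⟨Or.inl, Or.inl, Or.inl, Or.inl, Set.subset_union_left⟩
          · rw [eq_iff]
            refine ⟨⟨?_, fun hh => ⟨Or.inr hh, Or.inr hh⟩⟩, ⟨?_, fun hh => ⟨Or.inr hh, Or.inr hh⟩⟩,
              ⟨?_, fun hh => ⟨Or.inr hh, Or.inr hh⟩⟩, ⟨?_, fun hh => ⟨Or.inr hh, Or.inr hh⟩⟩, ?_⟩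
            · rintro ⟨h1 | h1, h2 | h2⟩
              · exact hu ⟨h1, h2⟩
              · exact h2
              · exact h1
              · exact h1
            · rintro ⟨h1 | h1, h2 | h2⟩
              · exact hv ⟨h1, h2⟩
              · exact h2
              · exact h1
              · exact h1
            · rintro ⟨h1 | h1, h2 | h2⟩
              · exact hp ⟨h1, h2⟩
              · exact h2
              · exact h1
              · exact h1
            · rintro ⟨h1 | h1, h2 | h2⟩
              · exact hq ⟨h1, h2⟩
              · exact h2
              · exact h1
              · exact h1
            · show (x.1.R ∪ z.1.R) ∩ (y.1.R ∪ z.1.R) = z.1.R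
              apply Set.Subset.antisymm
              · rintro t ⟨h1 | h1, h2 | h2⟩
                · exact hR ⟨h1, h2⟩
                · exact h2
                · exact h1
                · exact h1
              · exact fun t ht => ⟨Or.inr ht, Or.inr ht⟩
  · -- a ⊓ b = ⊥
    rw [eq_iff]
    refine ⟨?_, ?_, ?_, ?_, ?_⟩ <;> simp [a, b, inf_def, Bot.bot]
  · -- up a subfit
    intro x hx y hy hxy
    rw [Set.mem_setOf_eq, le_def] at hx hy
    by_cases h1 : (y.1.R \ x.1.R).Nonempty
    · obtain ⟨n, hny, hnx⟩ := h1
      have okz : Ok ⟨True, False, True, False, {n}⟩ :=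
        ⟨fun _ => trivial, False.elim, fun hh => absurd hh.2 id, fun _ => Set.finite_singleton n⟩
      refine ⟨⟨⟨True, False, True, False, {n}⟩, okz⟩, ?_, ?_, ?_⟩
      · exact ⟨fun _ => trivial, False.elim, fun _ => trivial, False.elim, by simp [a]⟩
      · rw [eq_iff]
        refine ⟨⟨fun _ => trivial, fun _ => ⟨hx.1 trivial, trivial⟩⟩,
          ⟨fun hh => hh.2.elim, False.elim⟩,
          ⟨fun _ => trivial, fun _ => ⟨hx.2.2.1 trivial, trivial⟩⟩,
          ⟨fun hh => hh.2.elim, False.elim⟩, ?_⟩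
        show x.1.R ∩ {n} = ∅
        rw [Set.eq_empty_iff_forall_notMem]
        rintro m ⟨hm1, hm2⟩
        rw [Set.mem_singleton_iff] at hm2
        exact hnx (hm2 ▸ hm1)
      · intro hcon
        rw [eq_iff] at hcon
        have : y.1.R ∩ {n} = ∅ := hcon.2.2.2.2
        rw [Set.eq_empty_iff_forall_notMem] at this
        exact this n ⟨hny, rfl⟩
    · by_cases h2 : y.1.q ∧ ¬ x.1.q
      · have okz : Ok ⟨True, False, True, True, ∅⟩ :=
          ⟨fun _ => trivial, fun _ => trivial, fun hh => absurd hh.2 id, fun _ => Set.finite_empty⟩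
        refine ⟨⟨⟨True, False, True, True, ∅⟩, okz⟩, ?_, ?_, ?_⟩
        · exact ⟨fun _ => trivial, False.elim, fun _ => trivial, False.elim, by simp [a]⟩
        · rw [eq_iff]
          refine ⟨⟨fun _ => trivial, fun _ => ⟨hx.1 trivial, trivial⟩⟩,
            ⟨fun hh => hh.2.elim, False.elim⟩,
            ⟨fun _ => trivial, fun _ => ⟨hx.2.2.1 trivial, trivial⟩⟩,
            ⟨fun hh => h2.2 hh.1, False.elim⟩, by show x.1.R ∩ ∅ = ∅; simp⟩
        · intro hcon
          rw [eq_iff] at hcon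
          exact hcon.2.2.2.1.mp ⟨h2.1, trivial⟩
      · by_cases h3 : y.1.v ∧ ¬ x.1.v
        · exfalso
          have hyRc : y.1.Rᶜ.Finite := y.2.2.2.1 ⟨hy.1 trivial, h3.1⟩
          have hyR : y.1.R.Infinite := by
            have := hyRc.infinite_compl
            rwa [compl_compl] at this
          have hxR : x.1.R.Finite := x.2.2.2.2 (fun hh => h3.2 hh.2)
          exact h1 (hyR.diff hxR).nonempty
        · exfalso
          apply hxy
          rw [le_def]
          refine ⟨fun _ => hx.1 trivial, ?_, fun _ => hx.2.2.1 trivial, ?_, ?_⟩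
          · intro hyv
            by_contra hxv
            exact h3 ⟨hyv, hxv⟩
          · intro hyq
            by_contra hxq
            exact h2 ⟨hyq, hxq⟩
          · intro t ht
            by_contra htx
            exact h1 ⟨t, ht, htx⟩
  · -- up b subfit
    intro x hx y hy hxy
    rw [Set.mem_setOf_eq, le_def] at hx hy
    by_cases h1 : (y.1.R \ x.1.R).Nonempty
    · obtain ⟨n, hny, hnx⟩ := h1
      have okz : Ok ⟨False, True, False, True, {n}⟩ :=
        ⟨False.elim, fun _ => trivial, fun hh => absurd hh.1 id, fun _ => Set.finite_singleton n⟩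
      refine ⟨⟨⟨False, True, False, True, {n}⟩, okz⟩, ?_, ?_, ?_⟩
      · exact ⟨False.elim, fun _ => trivial, False.elim, fun _ => trivial, by simp [b]⟩
      · rw [eq_iff]
        refine ⟨⟨fun hh => hh.2.elim, False.elim⟩,
          ⟨fun _ => trivial, fun _ => ⟨hx.2.1 trivial, trivial⟩⟩,
          ⟨fun hh => hh.2.elim, False.elim⟩,
          ⟨fun _ => trivial, fun _ => ⟨hx.2.2.2.1 trivial, trivial⟩⟩, ?_⟩
        show x.1.R ∩ {n} = ∅
        rw [Set.eq_empty_iff_forall_notMem]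
        rintro m ⟨hm1, hm2⟩
        rw [Set.mem_singleton_iff] at hm2
        exact hnx (hm2 ▸ hm1)
      · intro hcon
        rw [eq_iff] at hcon
        have : y.1.R ∩ {n} = ∅ := hcon.2.2.2.2
        rw [Set.eq_empty_iff_forall_notMem] at this
        exact this n ⟨hny, rfl⟩
    · by_cases h2 : y.1.p ∧ ¬ x.1.p
      · have okz : Ok ⟨False, True, True, True, ∅⟩ :=
          ⟨fun _ => trivial, fun _ => trivial, fun hh => absurd hh.1 id, fun _ => Set.finite_empty⟩
        refine ⟨⟨⟨False, True, True, True, ∅⟩, okz⟩, ?_, ?_, ?_⟩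
        · exact ⟨False.elim, fun _ => trivial, False.elim, fun _ => trivial, by simp [b]⟩
        · rw [eq_iff]
          refine ⟨⟨fun hh => hh.2.elim, False.elim⟩,
            ⟨fun _ => trivial, fun _ => ⟨hx.2.1 trivial, trivial⟩⟩,
            ⟨fun hh => h2.2 hh.1, False.elim⟩,
            ⟨fun _ => trivial, fun _ => ⟨hx.2.2.2.1 trivial, trivial⟩⟩,
            by show x.1.R ∩ ∅ = ∅; simp⟩
        · intro hcon
          rw [eq_iff] at hcon
          exact hcon.2.2.1.mp ⟨h2.1, trivial⟩
      · by_cases h3 : y.1.u ∧ ¬ x.1.u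
        · exfalso
          have hyRc : y.1.Rᶜ.Finite := y.2.2.2.1 ⟨h3.1, hy.2.1 trivial⟩
          have hyR : y.1.R.Infinite := by
            have := hyRc.infinite_compl
            rwa [compl_compl] at this
          have hxR : x.1.R.Finite := x.2.2.2.2 (fun hh => h3.2 hh.1)
          exact h1 (hyR.diff hxR).nonempty
        · exfalso
          apply hxy
          rw [le_def]
          refine ⟨?_, fun _ => hx.2.1 trivial, ?_, fun _ => hx.2.2.2.1 trivial, ?_⟩
          · intro hyu
            by_contra hxu
            exact h3 ⟨hyu, hxu⟩
          · intro hyp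
            by_contra hxp
            exact h2 ⟨hyp, hxp⟩
          · intro t ht
            by_contra htx
            exact h1 ⟨t, ht, htx⟩
  · -- not subfit
    intro h
    have okx0 : Ok ⟨False, False, True, False, ∅⟩ :=
      ⟨False.elim, False.elim, fun hh => absurd hh.1 id, fun _ => Set.finite_empty⟩
    have hya : ¬ a ≤ (⟨⟨False, False, True, False, ∅⟩, okx0⟩ : A) := by
      rw [le_def]; intro hh; exact hh.1 trivial
    obtain ⟨z, -, hz1, hz2⟩ := h ⟨⟨False, False, True, False, ∅⟩, okx0⟩ (Set.mem_univ _)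
      a (Set.mem_univ _) hya
    rw [eq_iff] at hz1
    have hzp : ¬ z.1.p := fun hp => (hz1.2.2.1.mp ⟨trivial, hp⟩)
    have hzu : ¬ z.1.u := fun hu => hzp (z.2.1 hu)
    apply hz2
    rw [eq_iff]
    refine ⟨?_, ?_, ?_, ?_, ?_⟩
    · exact ⟨fun hh => hzu hh.2, False.elim⟩
    · exact ⟨fun hh => hh.1.elim, False.elim⟩
    · exact ⟨fun hh => hzp hh.2, False.elim⟩
    · exact ⟨fun hh => hh.1.elim, False.elim⟩
    · show (∅ : Set ℕ) ∩ z.1.R = ∅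
      simp
end

section
/- Let A ⊆ B be an extension of bounded join-semilattices such that (a) for every b ∈ B there are a₁,…,aₙ ∈ A with a ∨ b = inf_B {a ∨ a₁, …, a ∨ aₙ} for all a ∈ A, and (b) every finite admissible subset F of A satisfies inf_A F = inf_B F. If B is join-subfit, then A is join-subfit. -/
variable {B : Type*}

/-- `m` is the infimum of `S` computed within the subset `A`. -/
def IsInfIn [SemilatticeSup B] (A : Set B) (S : Set B) (m : B) : Prop :=
  m ∈ A ∧ (∀ s ∈ S, m ≤ s) ∧ ∀ c ∈ A, (∀ s ∈ S, c ≤ s) → c ≤ m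

/-- A subset `S` of `A` is admissible if it has an infimum `m` in `A` and for
every `b ∈ A` the set `{s ⊔ b : s ∈ S}` has infimum `m ⊔ b` in `A`. -/
def Admissible [SemilatticeSup B] (A : Set B) (S : Set B) : Prop :=
  ∃ m, IsInfIn A S m ∧ ∀ b ∈ A, IsInfIn A {x | ∃ s ∈ S, x = s ⊔ b} (m ⊔ b)

/-- `A` is a bounded join-subsemilattice of `B`. -/
def IsBoundedSubsemilattice [SemilatticeSup B] [BoundedOrder B] (A : Set B) : Prop :=
  ⊥ ∈ A ∧ ⊤ ∈ A ∧ ∀ x ∈ A, ∀ y ∈ A, x ⊔ y ∈ A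

/-- Condition (a): every `b ∈ B` has `a₁, …, aₙ ∈ A` such that
`a ⊔ b = inf_B {a ⊔ a₁, …, a ⊔ aₙ}` for all `a ∈ A`. -/
def CondA [SemilatticeSup B] (A : Set B) : Prop :=
  ∀ b : B, ∃ (n : ℕ) (f : Fin n → B), (∀ i, f i ∈ A) ∧
    ∀ a ∈ A, IsGLB {x | ∃ i, x = a ⊔ f i} (a ⊔ b)

/-- Condition (b): finite admissible subsets of `A` have the same infimum in
`A` and in `B`. -/
def CondB [SemilatticeSup B] (A : Set B) : Prop :=
  ∀ S : Set B, S.Finite → S ⊆ A → Admissible A S →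
    ∀ m, IsInfIn A S m → IsGLB S m

theorem subfit_descends [SemilatticeSup B] [BoundedOrder B] (A : Set B)
    (hsub : IsBoundedSubsemilattice A) (ha : CondA A) (hb : CondB A)
    (hB : ∀ u v : B, ¬ u ≤ v → ∃ w : B, v ⊔ w ≠ ⊤ ∧ u ⊔ w = ⊤) :
    ∀ u ∈ A, ∀ v ∈ A, ¬ u ≤ v → ∃ w ∈ A, v ⊔ w ≠ ⊤ ∧ u ⊔ w = ⊤ := by
  intro u hu v hv huv
  obtain ⟨w, hvw, huw⟩ := hB u v huv
  obtain ⟨n, f, hf, hglb⟩ := ha w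
  have hu' := hglb u hu
  have hv' := hglb v hv
  by_contra hcon
  push_neg at hcon
  have hall : ∀ i, v ⊔ f i = ⊤ := by
    intro i
    by_contra hne
    have htop : u ⊔ f i = ⊤ :=
      le_antisymm le_top (huw ▸ hu'.1 ⟨i, rfl⟩)
    exact hcon (f i) (hf i) hne htop
  have : (⊤ : B) ∈ lowerBounds {x | ∃ i, x = v ⊔ f i} := by
    rintro x ⟨i, rfl⟩
    exact (hall i).ge
  exact hvw (le_antisymm le_top (hv'.2 this))
end

section
/- Let A ⊆ B be an extension of bounded join-semilattices such that (a) for every b ∈ B there are a₁,…,aₙ ∈ A with a ∨ b = inf_B {a ∨ a₁, …, a ∨ aₙ} for all a ∈ A, and (b) every finite admissible subset F of A satisfies inf_A F = inf_B F. If A is join-subfit, then B is join-subfit. -/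
variable {B : Type*}

theorem subfit_ascends [SemilatticeSup B] [BoundedOrder B] (A : Set B)
    (hsub : IsBoundedSubsemilattice A) (ha : CondA A) (hb : CondB A)
    (hA : ∀ u ∈ A, ∀ v ∈ A, ¬ u ≤ v → ∃ w ∈ A, v ⊔ w ≠ ⊤ ∧ u ⊔ w = ⊤) :
    ∀ u v : B, ¬ u ≤ v → ∃ w : B, v ⊔ w ≠ ⊤ ∧ u ⊔ w = ⊤ := by
  intro u v huv
  obtain ⟨n, f, hfA, hf⟩ := ha v
  obtain ⟨m', g, hgA, hg⟩ := ha u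
  have hbotglb := hf ⊥ hsub.1
  have hvf : ∀ i, v ≤ f i := by
    intro i
    have h1 : (⊥ : B) ⊔ v ≤ ⊥ ⊔ f i := hbotglb.1 ⟨i, rfl⟩
    simpa using h1
  have hi : ∃ i, ¬ u ≤ f i := by
    by_contra h
    push_neg at h
    have hlb : u ∈ lowerBounds {x | ∃ i, x = ⊥ ⊔ f i} := by
      rintro x ⟨i, rfl⟩
      simpa using h i
    have h2 : u ≤ ⊥ ⊔ v := hbotglb.2 hlb
    exact huv (by simpa using h2)
  obtain ⟨i₀, hi₀⟩ := hi
  set c := f i₀ with hc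
  have hcA : c ∈ A := hfA i₀
  by_cases hwin : ∃ c' ∈ A, c ≤ c' ∧ ∃ a ∈ A, (∀ j, a ≤ c' ⊔ g j) ∧ ¬ a ≤ c'
  · obtain ⟨c', hc'A, hcc', a, haA, halb, hac'⟩ := hwin
    obtain ⟨w, hwA, hne, heq⟩ := hA a haA c' hc'A hac'
    have hWA : c' ⊔ w ∈ A := hsub.2.2 c' hc'A w hwA
    refine ⟨c' ⊔ w, ?_, ?_⟩
    · have hvle : v ≤ c' ⊔ w := le_trans (le_trans (hvf i₀) hcc') le_sup_left
      rw [sup_eq_right.2 hvle]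
      exact hne
    · have hglb := hg (c' ⊔ w) hWA
      have htoplb : (⊤ : B) ∈ lowerBounds {x | ∃ j, x = (c' ⊔ w) ⊔ g j} := by
        rintro x ⟨j, rfl⟩
        have h1 : a ≤ (c' ⊔ w) ⊔ g j :=
          le_trans (halb j) (sup_le_sup_right le_sup_left _)
        have h2 : w ≤ (c' ⊔ w) ⊔ g j := le_trans le_sup_right le_sup_left
        have h3 : a ⊔ w ≤ (c' ⊔ w) ⊔ g j := sup_le h1 h2
        rw [heq] at h3
        exact h3
      have h4 : (⊤ : B) ≤ (c' ⊔ w) ⊔ u := hglb.2 htoplb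
      rw [sup_comm]
      exact top_le_iff.1 h4
  · push_neg at hwin
    have hSsub : {x | ∃ j, x = c ⊔ g j} ⊆ A := by
      rintro x ⟨j, rfl⟩
      exact hsub.2.2 c hcA (g j) (hgA j)
    have hSfin : {x | ∃ j, x = c ⊔ g j}.Finite := by
      have : {x | ∃ j, x = c ⊔ g j} = Set.range (fun j => c ⊔ g j) := by
        ext x
        simp [Set.mem_range, eq_comm]
      rw [this]
      exact Set.finite_range _
    have hinf : IsInfIn A {x | ∃ j, x = c ⊔ g j} c := by
      refine ⟨hcA, ?_, ?_⟩
      · rintro s ⟨j, rfl⟩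
        exact le_sup_left
      · intro a haA hlb
        exact hwin c hcA le_rfl a haA (fun j => hlb _ ⟨j, rfl⟩)
    have hadm : Admissible A {x | ∃ j, x = c ⊔ g j} := by
      refine ⟨c, hinf, ?_⟩
      intro b hbA
      have hcbA : c ⊔ b ∈ A := hsub.2.2 c hcA b hbA
      refine ⟨hcbA, ?_, ?_⟩
      · rintro s ⟨x, ⟨j, rfl⟩, rfl⟩
        exact sup_le_sup_right le_sup_left _
      · intro a haA hlb
        refine hwin (c ⊔ b) hcbA le_sup_left a haA (fun j => ?_)
        have h1 : a ≤ (c ⊔ g j) ⊔ b := hlb _ ⟨c ⊔ g j, ⟨j, rfl⟩, rfl⟩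
        rwa [sup_right_comm] at h1
    have hglbS := hb _ hSfin hSsub hadm c hinf
    have hglb2 := hg c hcA
    have hcu : c = c ⊔ u := hglbS.unique hglb2
    exact absurd (le_trans le_sup_right hcu.symm.le) hi₀
end

section
/- Under the hypotheses of the extension proposition, with A join-subfit and u, v ∈ B, u ≰ v, v ∈ A, and a₁,…,aₙ ∈ A satisfying c ∨ u = inf_B {c ∨ a₁,…,c ∨ aₙ} for all c ∈ A: there exists c ∈ A such that c ∨ v is not the infimum in A of {c ∨ a₁ ∨ v, …, c ∨ aₙ ∨ v}. -/
variable {B : Type*}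

theorem claim_in_extension [SemilatticeSup B] [BoundedOrder B] (A : Set B)
    (hsub : IsBoundedSubsemilattice A) (hb : CondB A)
    (hA : ∀ u ∈ A, ∀ v ∈ A, ¬ u ≤ v → ∃ w ∈ A, v ⊔ w ≠ ⊤ ∧ u ⊔ w = ⊤)
    (u v : B) (huv : ¬ u ≤ v) (hv : v ∈ A)
    (n : ℕ) (f : Fin n → B) (hf : ∀ i, f i ∈ A)
    (hglb : ∀ c ∈ A, IsGLB {x | ∃ i, x = c ⊔ f i} (c ⊔ u)) :
    ∃ c ∈ A, ¬ IsInfIn A {x | ∃ i, x = c ⊔ f i ⊔ v} (c ⊔ v) := by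
  by_contra hcon
  push_neg at hcon
  obtain ⟨hbot, htop, hsup⟩ := hsub
  set S : Set B := {x | ∃ i, x = f i ⊔ v} with hS
  have hSA : S ⊆ A := by
    rintro x ⟨i, rfl⟩; exact hsup _ (hf i) _ hv
  have hSfin : S.Finite := by
    have : S = Set.range (fun i => f i ⊔ v) := by
      ext x; simp [hS, eq_comm]
    rw [this]; exact Set.finite_range _
  have key : ∀ c ∈ A, IsInfIn A {x | ∃ i, x = c ⊔ f i ⊔ v} (c ⊔ v) := hcon
  -- inf in A of S is v
  have hvinf : IsInfIn A S v := by
    have h := key ⊥ hbot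
    simpa only [bot_sup_eq] using h
  have hadm : Admissible A S := by
    refine ⟨v, hvinf, fun b hbmem => ?_⟩
    have h := key b hbmem
    have hset : {x | ∃ s ∈ S, x = s ⊔ b} = {x | ∃ i, x = b ⊔ f i ⊔ v} := by
      ext x
      constructor
      · rintro ⟨s, ⟨i, rfl⟩, rfl⟩
        exact ⟨i, by ac_rfl⟩
      · rintro ⟨i, rfl⟩
        exact ⟨f i ⊔ v, ⟨i, rfl⟩, by ac_rfl⟩
    rw [hset, sup_comm v b]
    exact h
  have hvglb : IsGLB S v := hb S hSfin hSA hadm v hvinf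
  -- u is a lower bound of {f i}
  have huglb := hglb ⊥ hbot
  have hule : ∀ i, u ≤ f i := by
    intro i
    have := huglb.1 ⟨i, rfl⟩
    simpa using this
  have : u ≤ v := hvglb.2 (by rintro x ⟨i, rfl⟩; exact le_sup_of_le_left (hule i))
  exact huv this
end

section
/- Let X be a compact T₀ space whose compact open sets form a basis closed under finite unions. If the set of closed points of X is dense in the patch topology of X, then the join-semilattice QC(X) of compact open subsets of X (under union, with bottom ∅ and top X) is join-subfit. -/
open TopologicalSpace

/-- The patch topology: generated by differences of compact open sets. -/
def patchTopology (X : Type*) [TopologicalSpace X] : TopologicalSpace X :=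
  generateFrom {s | ∃ U V : Set X, IsCompact U ∧ IsOpen U ∧ IsCompact V ∧ IsOpen V ∧ s = U \ V}

/-- Compact open sets form a basis. -/
def CompactlyBased (X : Type*) [TopologicalSpace X] : Prop :=
  ∀ U : Set X, IsOpen U → ∀ x ∈ U, ∃ V : Set X, IsCompact V ∧ IsOpen V ∧ x ∈ V ∧ V ⊆ U

/-- The set of closed points. -/
def closedPts (X : Type*) [TopologicalSpace X] : Set X :=
  {x | IsClosed ({x} : Set X)}

/-!
Given compact opens `U ⊄ V`, the patch-open set `U \ V` is nonempty, so by patch density it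
contains a closed point `x`. Then `Uᶜ` is compact and lies in the open set `{x}ᶜ`, so it is
covered by a compact open `W ⊆ {x}ᶜ`. Now `U ∪ W = X`, while `x ∉ V ∪ W`.
-/

section

variable {X : Type*} [TopologicalSpace X]

theorem isOpen_patchTopology_diff {U V : Set X} (hUc : IsCompact U) (hUo : IsOpen U)
    (hVc : IsCompact V) (hVo : IsOpen V) : @IsOpen X (patchTopology X) (U \ V) :=
  isOpen_generateFrom_of_mem ⟨U, V, hUc, hUo, hVc, hVo, rfl⟩

theorem exists_mem_closedPts_diff_of_not_subset
    (hdense : @Dense X (patchTopology X) (closedPts X)) {U V : Set X}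
    (hUc : IsCompact U) (hUo : IsOpen U) (hVc : IsCompact V) (hVo : IsOpen V) (hUV : ¬ U ⊆ V) :
    ∃ x ∈ closedPts X, x ∈ U ∧ x ∉ V := by
  obtain ⟨x, hxUV, hx⟩ := (@dense_iff_inter_open X (patchTopology X) _).mp hdense (U \ V)
    (isOpen_patchTopology_diff hUc hUo hVc hVo) (Set.sdiff_nonempty.mpr hUV)
  exact ⟨x, hx, hxUV⟩

theorem CompactlyBased.exists_isCompact_isOpen_between (hbase : CompactlyBased X)
    {K O : Set X} (hK : IsCompact K) (hO : IsOpen O) (hKO : K ⊆ O) :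
    ∃ W : Set X, IsCompact W ∧ IsOpen W ∧ K ⊆ W ∧ W ⊆ O := by
  refine hK.induction_on (p := fun s => ∃ W : Set X, IsCompact W ∧ IsOpen W ∧ s ⊆ W ∧ W ⊆ O)
    ⟨∅, isCompact_empty, isOpen_empty, subset_rfl, Set.empty_subset O⟩ ?mono ?union ?nhds
  case mono =>
    rintro s t hst ⟨W, hWc, hWo, htW, hWO⟩
    exact ⟨W, hWc, hWo, hst.trans htW, hWO⟩
  case union =>
    rintro s t ⟨W₁, hW₁c, hW₁o, hsW₁, hW₁O⟩ ⟨W₂, hW₂c, hW₂o, htW₂, hW₂O⟩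
    exact ⟨W₁ ∪ W₂, hW₁c.union hW₂c, hW₁o.union hW₂o, Set.union_subset_union hsW₁ htW₂,
      Set.union_subset hW₁O hW₂O⟩
  case nhds =>
    intro x hx
    obtain ⟨W, hWc, hWo, hxW, hWO⟩ := hbase O hO x (hKO hx)
    exact ⟨W, mem_nhdsWithin_of_mem_nhds (hWo.mem_nhds hxW), W, hWc, hWo, subset_rfl, hWO⟩

end

theorem qcop_jsubfit_of_patch_dense_general {X : Type*} [TopologicalSpace X]
    [CompactSpace X] (hbase : CompactlyBased X)
    (hdense : @Dense X (patchTopology X) (closedPts X)) :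
    ∀ U V : Set X, IsCompact U → IsOpen U → IsCompact V → IsOpen V → ¬ U ⊆ V →
      ∃ W : Set X, IsCompact W ∧ IsOpen W ∧ U ∪ W = Set.univ ∧ V ∪ W ≠ Set.univ := by
  intro U V hUc hUo hVc hVo hUV
  obtain ⟨x, hx, hxU, hxV⟩ := exists_mem_closedPts_diff_of_not_subset hdense hUc hUo hVc hVo hUV
  obtain ⟨W, hWc, hWo, hUW, hWx⟩ := hbase.exists_isCompact_isOpen_between
    hUo.isClosed_compl.isCompact (isOpen_compl_iff.mpr hx)
    (Set.compl_subset_compl.mpr (Set.singleton_subset_iff.mpr hxU))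
  refine ⟨W, hWc, hWo, Set.compl_subset_iff_union.mp hUW, fun hVW => ?_⟩
  have hxVW : x ∈ V ∪ W := hVW ▸ Set.mem_univ x
  exact hxVW.elim hxV fun hxW => hWx hxW rfl

theorem qcop_jsubfit_of_patch_dense {X : Type*} [TopologicalSpace X] [T0Space X]
    [CompactSpace X] (hbase : CompactlyBased X)
    (hunion : ∀ U V : Set X, IsCompact U → IsOpen U → IsCompact V → IsOpen V →
      IsCompact (U ∪ V))
    (hdense : @Dense X (patchTopology X) (closedPts X)) :
    ∀ U V : Set X, IsCompact U → IsOpen U → IsCompact V → IsOpen V → ¬ U ⊆ V →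
      ∃ W : Set X, IsCompact W ∧ IsOpen W ∧ U ∪ W = Set.univ ∧ V ∪ W ≠ Set.univ :=
  qcop_jsubfit_of_patch_dense_general hbase hdense
end

section
/- Let X be a compact compactly based T₀ space (compact open sets form a basis). If the join-semilattice QC(X) of compact open sets (under union) is join-subfit, then the set of closed points of X is dense in the patch topology of X. -/
open TopologicalSpace

theorem patch_dense_of_qcop_jsubfit {X : Type*} [TopologicalSpace X] [T0Space X]
    [CompactSpace X] (hbase : CompactlyBased X)
    (hsubfit : ∀ U V : Set X, IsCompact U → IsOpen U → IsCompact V → IsOpen V →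
      ¬ U ⊆ V →
      ∃ W : Set X, IsCompact W ∧ IsOpen W ∧ U ∪ W = Set.univ ∧ V ∪ W ≠ Set.univ) :
    @Dense X (patchTopology X) (closedPts X) := by
  classical
  set gens : Set (Set X) :=
    {s | ∃ U V : Set X, IsCompact U ∧ IsOpen U ∧ IsCompact V ∧ IsOpen V ∧ s = U \ V} with hgens
  have hbasis := @isTopologicalBasis_of_subbasis X (patchTopology X) gens rfl
  rw [@IsTopologicalBasis.dense_iff X (patchTopology X) _ hbasis (closedPts X)]
  rintro _ ⟨f, ⟨hfin, hsub⟩, rfl⟩ ⟨x, hx⟩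
  -- choose compact open pairs for each member of f
  have h : ∀ s : Set X, ∃ UV : Set X × Set X, s ∈ f →
      IsCompact UV.1 ∧ IsOpen UV.1 ∧ IsCompact UV.2 ∧ IsOpen UV.2 ∧ s = UV.1 \ UV.2 := by
    intro s
    by_cases hs : s ∈ f
    · obtain ⟨U, V, h1, h2, h3, h4, h5⟩ := hsub hs
      exact ⟨(U, V), fun _ => ⟨h1, h2, h3, h4, h5⟩⟩
    · exact ⟨(∅, ∅), fun hs' => absurd hs' hs⟩
  choose UV hUV using h
  set Vt : Set X := ⋃ s ∈ f, (UV s).2 with hVt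
  have hVtc : IsCompact Vt := hfin.isCompact_biUnion fun s hs => (hUV s hs).2.2.1
  have hVto : IsOpen Vt := isOpen_biUnion fun s hs => (hUV s hs).2.2.2.1
  have hIo : IsOpen (⋂ s ∈ f, (UV s).1) := hfin.isOpen_biInter fun s hs => (hUV s hs).2.1
  have hxI : x ∈ ⋂ s ∈ f, (UV s).1 := by
    simp only [Set.mem_iInter]
    intro s hs
    have := hx
    rw [Set.mem_sInter] at this
    have hxs := this s hs
    rw [(hUV s hs).2.2.2.2] at hxs
    exact hxs.1
  obtain ⟨U, hUc, hUo, hxU, hUsub⟩ := hbase _ hIo x hxI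
  have hxVt : x ∉ Vt := by
    simp only [hVt, Set.mem_iUnion]
    rintro ⟨s, hs, hxs⟩
    have := hx
    rw [Set.mem_sInter] at this
    have hxs' := this s hs
    rw [(hUV s hs).2.2.2.2] at hxs'
    exact hxs'.2 hxs
  have hnsub : ¬ U ⊆ Vt := fun hsub' => hxVt (hsub' hxU)
  obtain ⟨W, hWc, hWo, hUW, hVW⟩ := hsubfit U Vt hUc hUo hVtc hVto hnsub
  -- C = Wᶜ \ Vt is closed, nonempty, contained in U \ Vt ⊆ ⋂₀ f
  have hCcl : IsClosed (Wᶜ ∩ Vtᶜ) := (hWo.isClosed_compl).inter (hVto.isClosed_compl)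
  have hCne : (Wᶜ ∩ Vtᶜ).Nonempty := by
    rcases Set.ne_univ_iff_exists_notMem _ |>.1 hVW with ⟨y, hy⟩
    exact ⟨y, fun hyW => hy (Or.inr hyW), fun hyV => hy (Or.inl hyV)⟩
  obtain ⟨z, hzC, hzcl⟩ := hCcl.exists_closed_singleton hCne
  refine ⟨z, ?_, hzcl⟩
  have hzU : z ∈ U := (Set.eq_univ_iff_forall.1 hUW z).resolve_right hzC.1
  have hzVt : z ∉ Vt := hzC.2
  rw [Set.mem_sInter]
  intro s hs
  rw [(hUV s hs).2.2.2.2]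
  refine ⟨?_, fun hzv => hzVt ?_⟩
  · have := hUsub hzU
    simp only [Set.mem_iInter] at this
    exact this s hs
  · exact Set.mem_biUnion hs hzv
end

section
/- A T₀ space X is compact if and only if the subspace of closed points of X is compact and every nonempty closed subset of X contains a closed point. -/
open TopologicalSpace

theorem compact_iff_closedPts {X : Type*} [TopologicalSpace X] [T0Space X] :
    CompactSpace X ↔
      (IsCompact (closedPts X) ∧
        ∀ C : Set X, IsClosed C → C.Nonempty → ∃ x ∈ C, IsClosed ({x} : Set X)) := by
  constructor
  · intro h
    have hpt : ∀ C : Set X, IsClosed C → C.Nonempty → ∃ x ∈ C, IsClosed ({x} : Set X) := by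
      intro C hC hne
      obtain ⟨x, hxC, hx⟩ := hC.exists_closed_singleton hne
      exact ⟨x, hxC, hx⟩
    refine ⟨?_, hpt⟩
    rw [isCompact_iff_finite_subcover]
    intro ι U hU hcov
    have huniv : (Set.univ : Set X) ⊆ ⋃ i, U i := by
      by_contra hcon
      have hne : (Set.univ \ ⋃ i, U i).Nonempty := by
        rw [Set.diff_nonempty]
        exact hcon
      obtain ⟨x, hxC, hx⟩ := hpt _ (isClosed_univ.sdiff (isOpen_iUnion hU)) hne
      exact hxC.2 (hcov hx)
    obtain ⟨t, ht⟩ := (isCompact_univ_iff.mpr h).elim_finite_subcover U hU huniv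
    exact ⟨t, (Set.subset_univ _).trans ht⟩
  · rintro ⟨hcpt, hpt⟩
    rw [← isCompact_univ_iff, isCompact_iff_finite_subcover]
    intro ι U hU hcov
    obtain ⟨t, ht⟩ := hcpt.elim_finite_subcover U hU ((Set.subset_univ _).trans hcov)
    refine ⟨t, ?_⟩
    by_contra hcon
    have hne : (Set.univ \ ⋃ i ∈ t, U i).Nonempty := by
      rw [Set.diff_nonempty]; exact hcon
    obtain ⟨x, hxC, hx⟩ :=
      hpt _ (isClosed_univ.sdiff (isOpen_biUnion fun i _ => hU i)) hne
    exact hxC.2 (ht hx)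
end
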